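/- arXiv:1710.01917 — 12 statements merged into one kernel-verified Lean document; each statement's English description precedes it below -/
import Mathlib

section
/- Let Γ be a connected highly-regular graph. Then the index of Γ equals diam(Γ) + 1 if and only if Γ is a distance-regular graph. -/
/-- A partition of the vertex set (encoded as a cell-assignment map `P : V → Fin m`)
witnessing that `C` is a collapsed adjacency matrix at the vertex `u`:
the cell of index `0` is exactly `{u}`, every cell is nonempty, and every vertex in
cell `j` has exactly `C i j` neighbours in cell `i`. -/
def IsWitnessingPartition {V : Type*} [Fintype V] (G : SimpleGraph V) {m : ℕ}
    (C : Fin m → Fin m → ℕ) (u : V) (P : V → Fin m) : Prop :=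
  (∀ v : V, (P v : ℕ) = 0 ↔ v = u) ∧
  (∀ t : Fin m, ∃ v : V, P v = t) ∧
  (∀ (i j : Fin m) (y : V), P y = j → {z : V | P z = i ∧ G.Adj y z}.ncard = C i j)

/-- `C` is a collapsed adjacency matrix (CAM) of size `m` for `G`: `2 ≤ m`, `m < n`
(with `m = n` allowed only when `n = 2`), and every vertex admits a witnessing partition. -/
def IsCAM {V : Type*} [Fintype V] (G : SimpleGraph V) {m : ℕ}
    (C : Fin m → Fin m → ℕ) : Prop :=
  2 ≤ m ∧ (m < Fintype.card V ∨ (m = Fintype.card V ∧ Fintype.card V = 2)) ∧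
  ∀ u : V, ∃ P : V → Fin m, IsWitnessingPartition G C u P

/-- A graph is highly-regular if it admits some CAM. -/
def IsHighlyRegular {V : Type*} [Fintype V] (G : SimpleGraph V) : Prop :=
  ∃ (m : ℕ) (C : Fin m → Fin m → ℕ), IsCAM G C

/-- The index of a highly-regular graph: the least size of a CAM. -/
noncomputable def hrIndex {V : Type*} [Fintype V] (G : SimpleGraph V) : ℕ :=
  sInf {m : ℕ | ∃ C : Fin m → Fin m → ℕ, IsCAM G C}

/-- A connected graph is distance-regular if the numbers `|D_1(v) ∩ D_{i-1}(u)|`,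
`|D_1(v) ∩ D_i(u)|`, `|D_1(v) ∩ D_{i+1}(u)|` depend only on `i = d(u,v)`. -/
def IsDistanceRegular {V : Type*} [Fintype V] (G : SimpleGraph V) : Prop :=
  G.Connected ∧ ∀ i : ℕ, 1 ≤ i → i ≤ G.diam →
    ∀ j : ℕ, j = i - 1 ∨ j = i ∨ j = i + 1 →
    ∀ u v x y : V, G.dist u v = i → G.dist x y = i →
      {w : V | G.Adj v w ∧ G.dist u w = j}.ncard =
      {w : V | G.Adj y w ∧ G.dist x w = j}.ncard

/-!
The cells of a witnessing partition at `u` refine the distance spheres around `u` in a way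
that does not depend on `u`: a walk in `Γ` projects to a walk in the quotient graph of the CAM
(cells joined when some vertex of one has a neighbour in the other), and conversely every walk
in the quotient graph lifts to a walk of the same length ending at any prescribed vertex of its
last cell. Hence `d(u, v)` is the quotient distance from the cell `{u}` to the cell of `v`.
Since all distances `0, …, diam Γ` occur, every CAM has at least `diam Γ + 1` cells, and a CAM
with exactly that many cells has one cell per sphere, which makes the intersection numbers
entries of the CAM. Conversely, the distance partition of a distance-regular graph is a CAM:
the intersection numbers give its entries away from the root, and at the root the number of
neighbours of `u` at distance `k` from `u` is a sum of entries of any given CAM.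
-/

open SimpleGraph Finset

namespace SimpleGraph

variable {V W : Type*} {G : SimpleGraph V}

lemma Reachable.exists_dist_eq_of_le {u v : V} {k : ℕ} (h : G.Reachable u v)
    (hk : k ≤ G.dist u v) : ∃ w, G.dist u w = k := by
  obtain ⟨p, hp⟩ := h.exists_walk_length_eq_dist
  refine ⟨p.getVert k, ?_⟩
  rw [← length_eq_dist_of_subwalk hp (p.isSubwalk_take k), Walk.take_length]
  omega

lemma Walk.edist_apply_le_length {H : SimpleGraph W} {f : V → W}
    (hf : ∀ ⦃y z⦄, G.Adj y z → f y = f z ∨ H.Adj (f y) (f z)) {u v : V} (p : G.Walk u v) :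
    H.edist (f u) (f v) ≤ p.length := by
  induction p with
  | nil => simp
  | @cons y z _ hadj p ih =>
    have hyz : H.edist (f y) (f z) ≤ 1 := edist_le_one_iff_adj_or_eq.mpr (hf hadj).symm
    calc H.edist (f y) (f _) ≤ H.edist (f y) (f z) + H.edist (f z) (f _) :=
          SimpleGraph.edist_triangle
      _ ≤ 1 + p.length := add_le_add hyz ih
      _ = (cons hadj p).length := by rw [length_cons, add_comm]; rfl

end SimpleGraph

lemma Set.ncard_setOf_and_mem_eq_sum {α ι : Type*} [Fintype α] [DecidableEq ι] (p : α → Prop)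
    (f : α → ι) (t : Finset ι) :
    {a | p a ∧ f a ∈ t}.ncard = ∑ i ∈ t, {a | f a = i ∧ p a}.ncard := by
  classical
  simp only [Set.ncard_eq_toFinset_card', Set.toFinset_ofPred]
  rw [card_eq_sum_card_fiberwise (f := f) (t := t) fun a ha => (mem_filter.mp ha).2.2]
  refine Finset.sum_congr rfl fun i _ => congrArg Finset.card ?_
  ext a
  simp only [mem_filter]
  grind

def camGraph {m : ℕ} (C : Fin m → Fin m → ℕ) : SimpleGraph (Fin m) :=
  SimpleGraph.fromRel fun i j => C i j ≠ 0

namespace IsWitnessingPartition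

variable {V : Type*} [Fintype V] {G : SimpleGraph V} {m : ℕ} {C : Fin m → Fin m → ℕ} {u : V}
  {P : V → Fin m}

lemma ncard_adj (hW : IsWitnessingPartition G C u P) (i : Fin m) (y : V) :
    {z | P z = i ∧ G.Adj y z}.ncard = C i (P y) :=
  hW.2.2 i _ y rfl

lemma apply_eq_apply_self_iff (hW : IsWitnessingPartition G C u P) {v : V} :
    P v = P u ↔ v = u := by
  rw [Fin.ext_iff, (hW.1 u).2 rfl, hW.1 v]

lemma apply_self_eq (hW : IsWitnessingPartition G C u P) {u' : V} {P' : V → Fin m}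
    (hW' : IsWitnessingPartition G C u' P') : P u = P' u' :=
  Fin.ext (((hW.1 u).2 rfl).trans ((hW'.1 u').2 rfl).symm)

lemma exists_adj_of_ne_zero (hW : IsWitnessingPartition G C u P) {i : Fin m} {y : V}
    (h : C i (P y) ≠ 0) : ∃ z, P z = i ∧ G.Adj y z :=
  Set.nonempty_of_ncard_ne_zero (s := {z | P z = i ∧ G.Adj y z}) (by rwa [hW.ncard_adj])

lemma ne_zero_of_adj (hW : IsWitnessingPartition G C u P) {y z : V} (h : G.Adj y z) :
    C (P y) (P z) ≠ 0 := by
  rw [← hW.ncard_adj]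
  exact ((Set.ncard_pos (s := {w | P w = P y ∧ G.Adj z w})).mpr ⟨y, rfl, h.symm⟩).ne'

lemma ne_zero_symm (hW : IsWitnessingPartition G C u P) {i j : Fin m} (h : C i j ≠ 0) :
    C j i ≠ 0 := by
  obtain ⟨y, rfl⟩ := hW.2.1 j
  obtain ⟨z, rfl, hyz⟩ := hW.exists_adj_of_ne_zero h
  exact hW.ne_zero_of_adj hyz

lemma eq_or_camGraph_adj (hW : IsWitnessingPartition G C u P) {y z : V} (h : G.Adj y z) :
    P y = P z ∨ (camGraph C).Adj (P y) (P z) := by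
  rw [camGraph, fromRel_adj]
  have := hW.ne_zero_of_adj h
  tauto

lemma exists_walk_lift (hW : IsWitnessingPartition G C u P) {i j : Fin m}
    (q : (camGraph C).Walk i j) {v : V} (hv : P v = j) :
    ∃ w, P w = i ∧ ∃ p : G.Walk w v, p.length = q.length := by
  induction q with
  | nil => exact ⟨v, hv, .nil, rfl⟩
  | @cons a _ _ hadj q ih =>
    obtain ⟨w', rfl, p, hp⟩ := ih hv
    have hC : C a (P w') ≠ 0 := by
      rw [camGraph, fromRel_adj] at hadj
      exact hadj.2.elim id hW.ne_zero_symm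
    obtain ⟨w, hw, hadj'⟩ := hW.exists_adj_of_ne_zero hC
    exact ⟨w, hw, .cons hadj'.symm p, by simp [hp]⟩

lemma edist_camGraph (hW : IsWitnessingPartition G C u P) (v : V) :
    (camGraph C).edist (P u) (P v) = G.edist u v := by
  apply le_antisymm
  · by_cases h : G.edist u v = ⊤
    · exact h ▸ le_top
    obtain ⟨p, hp⟩ := exists_walk_of_edist_ne_top h
    exact hp ▸ p.edist_apply_le_length fun _ _ h => hW.eq_or_camGraph_adj h
  · by_cases h : (camGraph C).edist (P u) (P v) = ⊤
    · exact h ▸ le_top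
    obtain ⟨q, hq⟩ := exists_walk_of_edist_ne_top h
    obtain ⟨w, hw, p, hp⟩ := hW.exists_walk_lift q rfl
    obtain rfl := hW.apply_eq_apply_self_iff.mp hw
    rw [← hq, ← hp]
    exact edist_le p

lemma dist_camGraph (hW : IsWitnessingPartition G C u P) (v : V) :
    (camGraph C).dist (P u) (P v) = G.dist u v :=
  congrArg ENat.toNat (hW.edist_camGraph v)

lemma ncard_adj_dist_eq_sum (hW : IsWitnessingPartition G C u P) (y : V) (k : ℕ) :
    {w | G.Adj y w ∧ G.dist u w = k}.ncard =
      ∑ i with (camGraph C).dist (P u) i = k, C i (P y) := by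
  have hset : {w | G.Adj y w ∧ G.dist u w = k} =
      {w | G.Adj y w ∧ P w ∈ univ.filter fun i => (camGraph C).dist (P u) i = k} := by
    ext w
    simp [hW.dist_camGraph]
  rw [hset, Set.ncard_setOf_and_mem_eq_sum]
  exact Finset.sum_congr rfl fun i _ => hW.ncard_adj i y

lemma range_subset_image_dist (hW : IsWitnessingPartition G C u P) (hconn : G.Connected)
    {v : V} (hv : G.dist u v = G.diam) :
    range (G.diam + 1) ⊆ univ.image ((camGraph C).dist (P u)) := by
  intro k hk
  obtain ⟨w, rfl⟩ := (hconn u v).exists_dist_eq_of_le (k := k) (by simp at hk; omega)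
  exact mem_image.mpr ⟨P w, mem_univ _, hW.dist_camGraph w⟩

end IsWitnessingPartition

namespace IsCAM

variable {V : Type*} [Fintype V] {G : SimpleGraph V} {m : ℕ} {C : Fin m → Fin m → ℕ}

lemma diam_add_one_le (hC : IsCAM G C) (hconn : G.Connected) : G.diam + 1 ≤ m := by
  have := hconn.nonempty
  obtain ⟨x, y, hxy⟩ := G.exists_dist_eq_diam
  obtain ⟨P, hP⟩ := hC.2.2 x
  simpa using (card_le_card (hP.range_subset_image_dist hconn hxy)).trans card_image_le

lemma exists_dist_eq (hC : IsCAM G C) (hconn : G.Connected) (u : V) {k : ℕ}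
    (hk : k ≤ G.diam) : ∃ v, G.dist u v = k := by
  have := hconn.nonempty
  obtain ⟨x, y, hxy⟩ := G.exists_dist_eq_diam
  obtain ⟨P, hP⟩ := hC.2.2 x
  obtain ⟨Pu, hPu⟩ := hC.2.2 u
  obtain ⟨v, hv⟩ := hPu.2.1 (P y)
  have huv : G.dist u v = G.diam := by
    rw [← hPu.dist_camGraph, hv, hPu.apply_self_eq hP, hP.dist_camGraph, hxy]
  exact (hconn u v).exists_dist_eq_of_le (huv ▸ hk)

lemma ncard_adj_dist_self_eq (hC : IsCAM G C) (u u' : V) (k : ℕ) :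
    {w | G.Adj u w ∧ G.dist u w = k}.ncard = {w | G.Adj u' w ∧ G.dist u' w = k}.ncard := by
  obtain ⟨P, hP⟩ := hC.2.2 u
  obtain ⟨P', hP'⟩ := hC.2.2 u'
  rw [hP.ncard_adj_dist_eq_sum, hP'.ncard_adj_dist_eq_sum, hP.apply_self_eq hP']

lemma isDistanceRegular {C : Fin (G.diam + 1) → Fin (G.diam + 1) → ℕ} (hC : IsCAM G C)
    (hconn : G.Connected) : IsDistanceRegular G := by
  have := hconn.nonempty
  obtain ⟨x, y, hxy⟩ := G.exists_dist_eq_diam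
  obtain ⟨P₀, hP₀⟩ := hC.2.2 x
  have hinj : Function.Injective ((camGraph C).dist (P₀ x)) := by
    have hsub := hP₀.range_subset_image_dist hconn hxy
    have hcard := (card_le_card hsub).antisymm' (card_image_le.trans_eq (by simp))
    simpa using card_image_iff.mp (hcard.trans (by simp))
  refine ⟨hconn, fun i _ _ j _ u v u' v' huv hu'v' => ?_⟩
  obtain ⟨P, hP⟩ := hC.2.2 u
  obtain ⟨P', hP'⟩ := hC.2.2 u'
  have hdist : ∀ {w : V} {Q : V → Fin (G.diam + 1)}, IsWitnessingPartition G C w Q →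
      ∀ z, (camGraph C).dist (P₀ x) (Q z) = G.dist w z := fun hQ z => by
    rw [hP₀.apply_self_eq hQ, hQ.dist_camGraph]
  have hcell : P v = P' v' := hinj <| by rw [hdist hP, hdist hP', huv, hu'v']
  rw [hP.ncard_adj_dist_eq_sum, hP'.ncard_adj_dist_eq_sum, hP.apply_self_eq hP', hcell]

end IsCAM

namespace IsDistanceRegular

variable {V : Type*} [Fintype V] {G : SimpleGraph V} {m : ℕ} {C : Fin m → Fin m → ℕ}

lemma ncard_adj_dist_eq (hdr : IsDistanceRegular G) (hC : IsCAM G C) {a b a' b' : V}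
    (h : G.dist a b = G.dist a' b') (k : ℕ) :
    {w | G.Adj b w ∧ G.dist a w = k}.ncard = {w | G.Adj b' w ∧ G.dist a' w = k}.ncard := by
  obtain ⟨hconn, hdr⟩ := hdr
  have := hconn.nonempty
  rcases Nat.eq_zero_or_pos (G.dist a b) with h0 | hpos
  · obtain rfl := hconn.dist_eq_zero_iff.mp h0
    obtain rfl := hconn.dist_eq_zero_iff.mp (h ▸ h0)
    exact hC.ncard_adj_dist_self_eq a a' k
  by_cases hk : k = G.dist a b - 1 ∨ k = G.dist a b ∨ k = G.dist a b + 1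
  · exact hdr _ hpos (dist_le_diam (connected_iff_ediam_ne_top.mp hconn)) k hk a b a' b' rfl h.symm
  have hempty : ∀ x y : V, G.dist x y = G.dist a b → {w | G.Adj y w ∧ G.dist x w = k} = ∅ := by
    intro x y hxy
    refine Set.eq_empty_of_forall_notMem fun w ⟨hyw, hxw⟩ => hk ?_
    have := hyw.diff_dist_adj (u := x)
    omega
  rw [hempty a b rfl, hempty a' b' h.symm]

lemma exists_isCAM_diam_add_one (hdr : IsDistanceRegular G) (hC : IsCAM G C) :
    ∃ C' : Fin (G.diam + 1) → Fin (G.diam + 1) → ℕ, IsCAM G C' := by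
  have hconn := hdr.1
  have := hconn.nonempty
  have hediam : G.ediam ≠ ⊤ := connected_iff_ediam_ne_top.mp hconn
  have : Nontrivial V :=
    Fintype.one_lt_card_iff_nontrivial.mp (by have := hC.1; have := hC.2.1; omega)
  have hdiam : G.diam ≠ 0 := diam_ne_zero_of_ediam_ne_top hediam
  have hm := hC.diam_add_one_le hconn
  obtain ⟨u₀⟩ := ‹Nonempty V›
  choose rep hrep using fun j : Fin (G.diam + 1) =>
    hC.exists_dist_eq hconn u₀ (Nat.lt_succ_iff.mp j.2)
  refine ⟨fun i j => {w | G.Adj (rep j) w ∧ G.dist u₀ w = i}.ncard, by omega,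
    by have := hC.2.1; omega, fun u => ?_⟩
  refine ⟨fun v => ⟨G.dist u v, Nat.lt_succ_of_le (dist_le_diam hediam)⟩, fun v => ?_,
    fun j => ?_, fun i j y hy => ?_⟩
  · simpa [eq_comm] using hconn.dist_eq_zero_iff (u := u) (v := v)
  · obtain ⟨v, hv⟩ := hC.exists_dist_eq hconn u (Nat.lt_succ_iff.mp j.2)
    exact ⟨v, Fin.ext hv⟩
  · simp only [Fin.ext_iff] at hy ⊢
    simp_rw [and_comm (a := G.dist u _ = _)]
    exact hdr.ncard_adj_dist_eq hC (hy.trans (hrep j).symm) i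

end IsDistanceRegular

/-- A connected highly-regular graph has index `diam(Γ) + 1`
iff it is a distance-regular graph. -/
theorem stmt0 {V : Type*} [Fintype V] (G : SimpleGraph V)
    (hconn : G.Connected) (hhr : IsHighlyRegular G) :
    hrIndex G = G.diam + 1 ↔ IsDistanceRegular G := by
  constructor
  · intro h
    obtain ⟨C, hC⟩ : ∃ C : Fin (G.diam + 1) → Fin (G.diam + 1) → ℕ, IsCAM G C :=
      h ▸ Nat.sInf_mem hhr
    exact hC.isDistanceRegular hconn
  · intro hdr
    obtain ⟨m, C, hC⟩ := hhr
    obtain ⟨C', hC'⟩ := hdr.exists_isCAM_diam_add_one hC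
    exact le_antisymm (Nat.sInf_le ⟨C', hC'⟩)
      (le_csInf ⟨_, C', hC'⟩ fun _ ⟨_, hC⟩ => hC.diam_add_one_le hconn)
end

section
/- Let Γ be a highly-regular graph with 3 ≤ diam(Γ) < ∞ (in particular Γ is connected). Then the complement graph Γ̄ is a highly-regular graph with diam(Γ̄) = 2, and Γ̄ is not a distance-regular graph. -/
open Finset

namespace HRaux

variable {V : Type*} [Fintype V] [DecidableEq V] {G : SimpleGraph V} [DecidableRel G.Adj]

lemma ncard_filter (p : V → Prop) [DecidablePred p] :
    {v | p v}.ncard = (univ.filter p).card := by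
  rw [Set.ncard_eq_toFinset_card']
  congr 1
  ext v
  simp

variable {m : ℕ} {C : Fin m → Fin m → ℕ}

lemma count_eq {u : V} {P : V → Fin m}
    (hw : IsWitnessingPartition G C u P) (i j : Fin m) (y : V) (hy : P y = j) :
    (univ.filter fun z => P z = i ∧ G.Adj y z).card = C i j := by
  rw [← ncard_filter]; exact hw.2.2 i j y hy

lemma edge_count {u : V} {P : V → Fin m}
    (hw : IsWitnessingPartition G C u P) (i j : Fin m) :
    (univ.filter fun v => P v = j).card * C i j
      = (univ.filter fun v => P v = i).card * C j i := by
  have key : ∀ (a b : Fin m),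
      (univ.filter fun v => P v = b).card * C a b
        = ∑ y : V, ∑ z : V, if P y = b ∧ P z = a ∧ G.Adj y z then 1 else 0 := by
    intro a b
    rw [← smul_eq_mul, ← Finset.sum_const, Finset.sum_filter]
    refine Finset.sum_congr rfl fun y _ => ?_
    by_cases hy : P y = b
    · rw [if_pos hy, ← count_eq hw a b y hy, Finset.card_filter]
      refine Finset.sum_congr rfl fun z _ => ?_
      simp [hy]
    · rw [if_neg hy]
      refine (Finset.sum_eq_zero fun z _ => ?_).symm
      simp [hy]
  rw [key i j, key j i, Finset.sum_comm]
  refine Finset.sum_congr rfl fun z _ => Finset.sum_congr rfl fun y _ => ?_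
  refine if_congr ?_ rfl rfl
  constructor
  · rintro ⟨h1, h2, h3⟩; exact ⟨h2, h1, h3.symm⟩
  · rintro ⟨h1, h2, h3⟩; exact ⟨h2, h1, h3.symm⟩

lemma cell_pos {u : V} {P : V → Fin m}
    (hw : IsWitnessingPartition G C u P) (i : Fin m) :
    0 < (univ.filter fun v => P v = i).card := by
  obtain ⟨v, hv⟩ := hw.2.1 i
  exact Finset.card_pos.mpr ⟨v, by simp [hv]⟩

lemma cell_zero {u : V} {P : V → Fin m}
    (hw : IsWitnessingPartition G C u P) {i : Fin m} (hi : (i : ℕ) = 0) :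
    (univ.filter fun v => P v = i) = {u} := by
  ext v
  simp only [mem_filter, mem_univ, true_and, mem_singleton]
  rw [← hw.1 v]
  constructor
  · intro h; rw [h, hi]
  · intro h; exact Fin.ext (by rw [h, hi])

lemma adj_step {u : V} {P : V → Fin m}
    (hw : IsWitnessingPartition G C u P) {a b : V} (hab : G.Adj a b) :
    C (P b) (P a) ≠ 0 := by
  have h1 := count_eq hw (P b) (P a) a rfl
  have h2 : 0 < (univ.filter fun z => P z = P b ∧ G.Adj a z).card :=
    Finset.card_pos.mpr ⟨b, by simp [hab]⟩
  omega

/-- Index connectivity relation derived from the CAM. -/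
def Rel (C : Fin m → Fin m → ℕ) (i j : Fin m) : Prop := C i j ≠ 0 ∨ C j i ≠ 0

lemma reach {u : V} {P : V → Fin m}
    (hw : IsWitnessingPartition G C u P) (a b : V) (p : G.Walk a b) :
    Relation.ReflTransGen (Rel C) (P a) (P b) := by
  induction p with
  | nil => exact Relation.ReflTransGen.refl
  | cons h q ih => exact Relation.ReflTransGen.head (Or.inr (adj_step hw h)) ih

lemma sizes_eq (hconn : G.Connected) {u u' : V} {P P' : V → Fin m}
    (hw : IsWitnessingPartition G C u P) (hw' : IsWitnessingPartition G C u' P')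
    (hm : 0 < m) (i : Fin m) :
    (univ.filter fun v => P v = i).card = (univ.filter fun v => P' v = i).card := by
  have key : ∀ j : Fin m, Relation.ReflTransGen (Rel C) ⟨0, hm⟩ j →
      (univ.filter fun v => P v = j).card = (univ.filter fun v => P' v = j).card := by
    intro j hre
    induction hre with
    | refl =>
        rw [cell_zero hw rfl, cell_zero hw' rfl]
        simp
    | @tail b c _ hrel ih =>
        have e1 := edge_count hw b c
        have e2 := edge_count hw' b c
        have pb := cell_pos hw b
        have hbc : C b c ≠ 0 := by
          rcases hrel with h | h
          · exact h
          · intro h0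
            rw [h0, mul_zero] at e1
            exact (Nat.mul_ne_zero (by omega) h) e1.symm
        have heq : (univ.filter fun v => P v = c).card * C b c
            = (univ.filter fun v => P' v = c).card * C b c := by
          rw [e1, e2, ih]
        exact Nat.eq_of_mul_eq_mul_right (Nat.pos_of_ne_zero hbc) heq
  -- reachability from the zero cell to i
  have hPu : P u = ⟨0, hm⟩ := Fin.ext ((hw.1 u).mpr rfl)
  obtain ⟨v, hv⟩ := hw.2.1 i
  have hre : Relation.ReflTransGen (Rel C) ⟨0, hm⟩ i := by
    have := reach hw u v ((hconn u v).some)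
    rwa [hPu, hv] at this
  exact key i hre

lemma compl_witness [DecidableRel Gᶜ.Adj] {u : V} {P : V → Fin m} (S : Fin m → ℕ)
    (hS : ∀ i, (univ.filter fun v => P v = i).card = S i)
    (hw : IsWitnessingPartition G C u P) :
    IsWitnessingPartition Gᶜ (fun i j => S i - C i j - if i = j then 1 else 0) u P := by
  refine ⟨hw.1, hw.2.1, ?_⟩
  intro i j y hy
  rw [ncard_filter]
  show (univ.filter fun z => P z = i ∧ Gᶜ.Adj y z).card = S i - C i j - if i = j then 1 else 0
  have hAcard : (univ.filter fun z => P z = i ∧ G.Adj y z).card = C i j :=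
    count_eq hw i j y hy
  have hBcard : (univ.filter fun z => P z = i ∧ z = y).card = if i = j then 1 else 0 := by
    by_cases hij : i = j
    · rw [if_pos hij]
      have hBy : (univ.filter fun z => P z = i ∧ z = y) = {y} := by
        ext z
        simp only [mem_filter, mem_univ, true_and, mem_singleton]
        constructor
        · rintro ⟨-, h⟩; exact h
        · rintro rfl; exact ⟨hy.trans hij.symm, rfl⟩
      rw [hBy, card_singleton]
    · rw [if_neg hij, Finset.card_eq_zero]
      ext z
      simp only [mem_filter, mem_univ, true_and, notMem_empty, iff_false]
      rintro ⟨h1, rfl⟩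
      exact hij (by rw [← h1, hy])
  have hsplit : (univ.filter fun v => P v = i)
      = (univ.filter fun z => P z = i ∧ G.Adj y z)
        ∪ (univ.filter fun z => P z = i ∧ z = y)
        ∪ (univ.filter fun z => P z = i ∧ Gᶜ.Adj y z) := by
    ext z
    simp only [mem_union, mem_filter, mem_univ, true_and, SimpleGraph.compl_adj]
    constructor
    · intro hz
      by_cases h1 : G.Adj y z
      · exact Or.inl (Or.inl ⟨hz, h1⟩)
      · by_cases h2 : z = y
        · exact Or.inl (Or.inr ⟨hz, h2⟩)
        · exact Or.inr ⟨hz, Ne.symm h2, h1⟩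
    · rintro ((⟨h, -⟩ | ⟨h, -⟩) | ⟨h, -⟩) <;> exact h
  have hd1 : Disjoint (univ.filter fun z => P z = i ∧ G.Adj y z)
      (univ.filter fun z => P z = i ∧ z = y) := by
    rw [Finset.disjoint_left]
    intro z hzA hzB
    simp only [mem_filter, mem_univ, true_and] at hzA hzB
    obtain ⟨-, rfl⟩ := hzB
    exact G.irrefl hzA.2
  have hd2 : Disjoint (univ.filter fun z => P z = i ∧ G.Adj y z)
      (univ.filter fun z => P z = i ∧ Gᶜ.Adj y z) := by
    rw [Finset.disjoint_left]
    intro z hzA hzB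
    simp only [mem_filter, mem_univ, true_and, SimpleGraph.compl_adj] at hzA hzB
    exact hzB.2.2 hzA.2
  have hd3 : Disjoint (univ.filter fun z => P z = i ∧ z = y)
      (univ.filter fun z => P z = i ∧ Gᶜ.Adj y z) := by
    rw [Finset.disjoint_left]
    intro z hzA hzB
    simp only [mem_filter, mem_univ, true_and, SimpleGraph.compl_adj] at hzA hzB
    exact hzB.2.1 hzA.2.symm
  have htot : S i = C i j + (if i = j then 1 else 0)
      + (univ.filter fun z => P z = i ∧ Gᶜ.Adj y z).card := by
    rw [← hS i, hsplit, Finset.card_union_of_disjoint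
        (Finset.disjoint_union_left.mpr ⟨hd2, hd3⟩),
      Finset.card_union_of_disjoint hd1, hAcard, hBcard]
  split_ifs at htot ⊢ <;> omega

lemma degree_eq {u : V} {P : V → Fin m} (hm : 0 < m)
    (hw : IsWitnessingPartition G C u P) :
    (univ.filter fun z => G.Adj u z).card = ∑ i : Fin m, C i ⟨0, hm⟩ := by
  have hPu : P u = ⟨0, hm⟩ := Fin.ext ((hw.1 u).mpr rfl)
  rw [Finset.card_eq_sum_card_fiberwise (f := P) (t := univ) (fun x _ => mem_univ _)]
  refine Finset.sum_congr rfl fun i _ => ?_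
  rw [← count_eq hw i ⟨0, hm⟩ u hPu]
  congr 1
  ext z
  simp only [mem_filter, mem_univ, true_and]
  tauto

lemma walk_split {a b : V} (p : G.Walk a b) :
    ∀ k, k ≤ p.length →
    ∃ (w : V) (q : G.Walk a w) (r : G.Walk w b), q.length = k ∧ r.length = p.length - k := by
  induction p with
  | nil =>
    intro k hk
    have hk0 : k = 0 := by simpa using hk
    exact ⟨_, .nil, .nil, by simp [hk0], by simp⟩
  | cons h q ih =>
    intro k hk
    cases k with
    | zero => exact ⟨_, .nil, .cons h q, rfl, by simp⟩
    | succ k' =>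
      obtain ⟨w, q1, r1, hq1, hr1⟩ := ih k' (by
        simp only [SimpleGraph.Walk.length_cons] at hk; omega)
      refine ⟨w, .cons h q1, r1, by simp [hq1], ?_⟩
      simp only [SimpleGraph.Walk.length_cons, hr1]
      omega

lemma exists_dist_eq (hconn : G.Connected) (u v : V) (k : ℕ)
    (hk : k ≤ G.dist u v) : ∃ w, G.dist u w = k := by
  obtain ⟨p, hp⟩ := hconn.exists_walk_length_eq_dist u v
  obtain ⟨w, q, r, hq, hr⟩ := walk_split p k (by omega)
  have h1 : G.dist u w ≤ k := hq ▸ SimpleGraph.dist_le q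
  have h2 : G.dist w v ≤ G.dist u v - k := by
    have := SimpleGraph.dist_le r; omega
  have h3 : G.dist u v ≤ G.dist u w + G.dist w v := hconn.dist_triangle
  exact ⟨w, by omega⟩

end HRaux

/-- For a highly-regular graph `Γ` with `3 ≤ diam Γ < ∞` (in particular
connected), the complement is a highly-regular graph with diameter `2` which is not
distance-regular. -/
theorem stmt2 {V : Type*} [Fintype V] (G : SimpleGraph V)
    (hhr : IsHighlyRegular G) (hconn : G.Connected) (hdiam : 3 ≤ G.diam) :
    IsHighlyRegular Gᶜ ∧ Gᶜ.diam = 2 ∧ ¬ IsDistanceRegular Gᶜ := by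
  classical
  obtain ⟨m, C, hm2, hmn, hPall⟩ := hhr
  have hm0 : 0 < m := by omega
  have hne : Nonempty V := hconn.nonempty
  -- the common cell-size function
  obtain ⟨P₀, hP₀⟩ := hPall (Classical.arbitrary V)
  have hS : ∀ (u : V) (P : V → Fin m), IsWitnessingPartition G C u P →
      ∀ i, (univ.filter fun v => P v = i).card
        = (univ.filter fun v => P₀ v = i).card :=
    fun u P hw i => HRaux.sizes_eq hconn hw hP₀ hm0 i
  -- Part A : the complement is highly regular
  have hHRc : IsHighlyRegular Gᶜ := by
    refine ⟨m, fun i j => (univ.filter fun v => P₀ v = i).card - C i j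
      - if i = j then 1 else 0, hm2, hmn, fun u => ?_⟩
    obtain ⟨P, hw⟩ := hPall u
    exact ⟨P, HRaux.compl_witness _ (hS u P hw) hw⟩
  -- regularity
  have hreg : ∀ u : V, (univ.filter fun z => G.Adj u z).card
      = ∑ i : Fin m, C i ⟨0, hm0⟩ := by
    intro u; obtain ⟨P, hw⟩ := hPall u; exact HRaux.degree_eq hm0 hw
  set k : ℕ := ∑ i : Fin m, C i ⟨0, hm0⟩ with hkdef
  -- a pair at distance ≥ 3
  obtain ⟨u, v, huv⟩ := SimpleGraph.exists_dist_eq_diam (G := G)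
  have hd3 : 3 ≤ G.dist u v := huv ▸ hdiam
  have hune : u ≠ v := by
    intro h; rw [h, SimpleGraph.dist_self] at hd3; omega
  have hnadj : ¬ G.Adj u v := by
    intro h
    have := SimpleGraph.dist_eq_one_iff_adj.mpr h
    omega
  have hdisjN : ∀ w : V, ¬ (G.Adj u w ∧ G.Adj v w) := by
    rintro w ⟨h1, h2⟩
    have t : G.dist u v ≤ G.dist u w + G.dist w v := hconn.dist_triangle
    have d1 : G.dist u w = 1 := SimpleGraph.dist_eq_one_iff_adj.mpr h1
    have d2 : G.dist w v = 1 := SimpleGraph.dist_eq_one_iff_adj.mpr h2.symm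
    omega
  -- |V| ≥ 2k + 2
  have hcard_uv : (({u, v} : Finset V)
      ∪ (univ.filter fun z => G.Adj u z) ∪ (univ.filter fun z => G.Adj v z)).card
      = 2 + k + k := by
    have hdA : Disjoint ({u, v} : Finset V) (univ.filter fun z => G.Adj u z) := by
      rw [Finset.disjoint_left]
      intro z hz hz'
      simp only [mem_insert, mem_singleton] at hz
      simp only [mem_filter, mem_univ, true_and] at hz'
      rcases hz with rfl | rfl
      · exact G.irrefl hz'
      · exact hnadj hz'
    have hdB : Disjoint (({u, v} : Finset V) ∪ (univ.filter fun z => G.Adj u z))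
        (univ.filter fun z => G.Adj v z) := by
      rw [Finset.disjoint_left]
      intro z hz hz'
      simp only [mem_union, mem_insert, mem_singleton, mem_filter, mem_univ, true_and] at hz hz'
      rcases hz with (rfl | rfl) | h
      · exact hnadj hz'.symm
      · exact G.irrefl hz'
      · exact hdisjN z ⟨h, hz'⟩
    rw [Finset.card_union_of_disjoint hdB, Finset.card_union_of_disjoint hdA,
      hreg u, hreg v, Finset.card_insert_of_notMem (by simp [hune]), card_singleton]
  have hn2k : 2 + k + k ≤ Fintype.card V := by
    rw [← hcard_uv]; exact Finset.card_le_univ _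
  -- every adjacent pair has a common non-neighbour
  have hcommon : ∀ x y : V, G.Adj x y →
      ∃ z, z ≠ x ∧ z ≠ y ∧ ¬ G.Adj x z ∧ ¬ G.Adj y z := by
    intro x y hxy
    have hTcard : ((univ.filter fun z => G.Adj x z) ∪ (univ.filter fun z => G.Adj y z)).card
        ≤ k + k := by
      refine (Finset.card_union_le _ _).trans ?_
      rw [hreg x, hreg y]
    have hTne : ((univ.filter fun z => G.Adj x z) ∪ (univ.filter fun z => G.Adj y z)) ≠ univ := by
      intro h
      have := congrArg Finset.card h
      rw [Finset.card_univ] at this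
      omega
    have hzex : ∃ z, z ∉ ((univ.filter fun z => G.Adj x z) ∪ (univ.filter fun z => G.Adj y z)) := by
      by_contra h
      push_neg at h
      exact hTne (Finset.eq_univ_iff_forall.mpr h)
    obtain ⟨z, hz⟩ := hzex
    simp only [mem_union, mem_filter, mem_univ, true_and, not_or] at hz
    obtain ⟨h1, h2⟩ := hz
    refine ⟨z, ?_, ?_, h1, h2⟩
    · rintro rfl; exact h2 hxy.symm
    · rintro rfl; exact h1 hxy
  -- complement eccentricities ≤ 2
  have hedist2 : ∀ a b : V, Gᶜ.edist a b ≤ 2 := by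
    intro a b
    by_cases hab : a = b
    · subst hab; simp [SimpleGraph.edist_self]
    by_cases h : G.Adj a b
    · obtain ⟨z, hz1, hz2, hz3, hz4⟩ := hcommon a b h
      have haz : Gᶜ.Adj a z := (G.compl_adj a z).mpr ⟨Ne.symm hz1, hz3⟩
      have hzb : Gᶜ.Adj z b := (G.compl_adj z b).mpr ⟨hz2, fun h' => hz4 h'.symm⟩
      have e := SimpleGraph.edist_le
        (SimpleGraph.Walk.cons haz (SimpleGraph.Walk.cons hzb SimpleGraph.Walk.nil))
      simpa using e
    · have hadj : Gᶜ.Adj a b := (G.compl_adj a b).mpr ⟨hab, h⟩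
      have e := SimpleGraph.edist_le (SimpleGraph.Walk.cons hadj SimpleGraph.Walk.nil)
      refine le_trans ?_ (by norm_num : (1 : ℕ∞) ≤ 2)
      simpa using e
  have hediam : Gᶜ.ediam ≤ 2 := SimpleGraph.ediam_le_of_edist_le fun a b => hedist2 a b
  -- an adjacent pair in G
  obtain ⟨p, hp⟩ := hconn.exists_walk_length_eq_dist u v
  have hadj_ub : G.Adj u (p.getVert 1) := by
    have := p.adj_getVert_succ (i := 0) (by omega)
    simpa using this
  have hub_edist : Gᶜ.edist u (p.getVert 1) = 2 := by
    have hne_ub : u ≠ p.getVert 1 := G.ne_of_adj hadj_ub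
    have h0 : Gᶜ.edist u (p.getVert 1) ≠ 0 :=
      fun h => hne_ub (SimpleGraph.edist_eq_zero_iff.mp h)
    have h1 : Gᶜ.edist u (p.getVert 1) ≠ 1 := fun h =>
      ((G.compl_adj u (p.getVert 1)).mp (SimpleGraph.edist_eq_one_iff_adj.mp h)).2 hadj_ub
    have h2 := hedist2 u (p.getVert 1)
    have hne_top : Gᶜ.edist u (p.getVert 1) ≠ ⊤ := by
      intro h; rw [h] at h2; simp at h2
    have hcoe : ((Gᶜ.edist u (p.getVert 1)).toNat : ℕ∞) = Gᶜ.edist u (p.getVert 1) :=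
      ENat.coe_toNat hne_top
    set e := (Gᶜ.edist u (p.getVert 1)).toNat with hedef
    rw [← hcoe] at h0 h1 h2 ⊢
    have e2 : e ≤ 2 := by exact_mod_cast h2
    have e0 : e ≠ 0 := by exact_mod_cast h0
    have e1 : e ≠ 1 := by exact_mod_cast h1
    have : e = 2 := by omega
    exact_mod_cast this
  have hediam2 : Gᶜ.ediam = 2 :=
    le_antisymm hediam (hub_edist ▸ SimpleGraph.edist_le_ediam)
  have hdiam2 : Gᶜ.diam = 2 := by
    unfold SimpleGraph.diam
    rw [hediam2]
    rfl
  refine ⟨hHRc, hdiam2, ?_⟩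
  -- Part C: not distance-regular
  rintro ⟨-, hdr⟩
  obtain ⟨w2, hw2⟩ := HRaux.exists_dist_eq hconn u v 2 (by omega)
  -- a common neighbour c of u and w2
  obtain ⟨q, hq⟩ := hconn.exists_walk_length_eq_dist u w2
  have hql : q.length = 2 := by rw [hq, hw2]
  have hc1 : G.Adj u (q.getVert 1) := by
    have := q.adj_getVert_succ (i := 0) (by omega)
    simpa using this
  have hc2 : G.Adj (q.getVert 1) w2 := by
    have h := q.adj_getVert_succ (i := 1) (by omega)
    have h2 : q.getVert 2 = w2 := by
      rw [show (2 : ℕ) = q.length from hql.symm, q.getVert_length]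
    rwa [h2] at h
  have hu_w2_ne : u ≠ w2 := by
    intro h; rw [h, SimpleGraph.dist_self] at hw2; omega
  have hu_w2_nadj : ¬ G.Adj u w2 := by
    intro h
    have := SimpleGraph.dist_eq_one_iff_adj.mpr h
    omega
  have hdc_uv : Gᶜ.dist u v = 1 :=
    SimpleGraph.dist_eq_one_iff_adj.mpr ((G.compl_adj u v).mpr ⟨hune, hnadj⟩)
  have hdc_uw2 : Gᶜ.dist u w2 = 1 :=
    SimpleGraph.dist_eq_one_iff_adj.mpr ((G.compl_adj u w2).mpr ⟨hu_w2_ne, hu_w2_nadj⟩)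
  have key := hdr 1 le_rfl (by rw [hdiam2]; omega) 1 (Or.inr (Or.inl rfl))
    u v u w2 hdc_uv hdc_uw2
  -- rewrite the two counted sets as complements of explicit finsets
  have hset : ∀ a b : V, {w : V | Gᶜ.Adj b w ∧ Gᶜ.dist a w = 1}.ncard
      = Fintype.card V - (({a, b} : Finset V)
        ∪ (univ.filter fun z => G.Adj a z) ∪ (univ.filter fun z => G.Adj b z)).card := by
    intro a b
    have hs1 : {w : V | Gᶜ.Adj b w ∧ Gᶜ.dist a w = 1}
        = {w : V | Gᶜ.Adj b w ∧ Gᶜ.Adj a w} := by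
      ext w
      simp [SimpleGraph.dist_eq_one_iff_adj]
    rw [hs1, HRaux.ncard_filter]
    have hs2 : (univ.filter fun w => Gᶜ.Adj b w ∧ Gᶜ.Adj a w)
        = (({a, b} : Finset V)
          ∪ (univ.filter fun z => G.Adj a z) ∪ (univ.filter fun z => G.Adj b z))ᶜ := by
      ext w
      simp only [mem_compl, mem_union, mem_filter, mem_univ, true_and, mem_insert,
        mem_singleton, SimpleGraph.compl_adj, not_or]
      constructor
      · rintro ⟨⟨hbw, hnbw⟩, haw, hnaw⟩
        exact ⟨⟨⟨fun h => haw h.symm, fun h => hbw h.symm⟩, hnaw⟩, hnbw⟩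
      · rintro ⟨⟨⟨h1, h2⟩, h3⟩, h4⟩
        exact ⟨⟨fun h => h2 h.symm, h4⟩, fun h => h1 h.symm, h3⟩
    rw [hs2, Finset.card_compl]
  rw [hset u v, hset u w2] at key
  -- card of the second excluded set is at most 2k+1
  have hint : 0 < ((univ.filter fun z => G.Adj u z)
      ∩ (univ.filter fun z => G.Adj w2 z)).card :=
    Finset.card_pos.mpr ⟨q.getVert 1, by
      simp only [mem_inter, mem_filter, mem_univ, true_and]
      exact ⟨hc1, hc2.symm⟩⟩
  have hUnion : ((univ.filter fun z => G.Adj u z) ∪ (univ.filter fun z => G.Adj w2 z)).card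
      + ((univ.filter fun z => G.Adj u z) ∩ (univ.filter fun z => G.Adj w2 z)).card
      = k + k := by
    rw [Finset.card_union_add_card_inter, hreg u, hreg w2]
  have hT2 : (({u, w2} : Finset V)
      ∪ (univ.filter fun z => G.Adj u z) ∪ (univ.filter fun z => G.Adj w2 z)).card
      ≤ 2 + (k + k - 1) := by
    rw [Finset.union_assoc]
    refine (Finset.card_union_le _ _).trans ?_
    have hle2 : ({u, w2} : Finset V).card ≤ 2 :=
      (Finset.card_insert_le _ _).trans (by simp)
    omega
  -- card of the first excluded set is at most |V| (trivially) and exactly 2k+2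
  have hle_univ : (({u, w2} : Finset V)
      ∪ (univ.filter fun z => G.Adj u z) ∪ (univ.filter fun z => G.Adj w2 z)).card
      ≤ Fintype.card V := Finset.card_le_univ _
  rw [hcard_uv] at key
  omega
end

section
/- Let Γ be a connected highly-regular graph with CAM C = [c_{i,j}]_{1≤i,j≤m} and valency k, whose CAM labeling is with respect to distance via sets S_0, S_1, …, S_{diam(Γ)}. Then k = b_0^max ≥ b_1^max ≥ ⋯ ≥ b_{diam(Γ)−1}^max ≥ 1. -/
open Finset in
lemma ncard_setOf_eq_card_filter {V : Type*} [Fintype V] (p : V → Prop) [DecidablePred p] :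
    {z : V | p z}.ncard = (Finset.univ.filter p).card := by
  rw [← Set.ncard_coe_finset]
  congr 1
  ext z
  simp

/-- Counting neighbours of `y` lying in a union of cells of a witnessing partition. -/
lemma count_cells {V : Type*} [Fintype V] (G : SimpleGraph V) {m : ℕ}
    (C : Fin m → Fin m → ℕ) (u : V) (P : V → Fin m)
    (hP : IsWitnessingPartition G C u P) (T : Finset (Fin m)) (y : V) :
    {z : V | P z ∈ T ∧ G.Adj y z}.ncard = ∑ t ∈ T, C t (P y) := by
  classical
  rw [ncard_setOf_eq_card_filter]
  have hsplit : (Finset.univ.filter fun z => P z ∈ T ∧ G.Adj y z)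
      = T.biUnion (fun t => Finset.univ.filter fun z => P z = t ∧ G.Adj y z) := by
    ext z
    simp only [Finset.mem_filter, Finset.mem_univ, true_and, Finset.mem_biUnion]
    constructor
    · rintro ⟨h1, h2⟩; exact ⟨P z, h1, rfl, h2⟩
    · rintro ⟨t, ht, rfl, h2⟩; exact ⟨ht, h2⟩
  rw [hsplit, Finset.card_biUnion]
  · refine Finset.sum_congr rfl fun t _ => ?_
    have := hP.2.2 t (P y) y rfl
    rwa [ncard_setOf_eq_card_filter] at this
  · intro a _ b _ hab
    simp only [Finset.disjoint_left, Finset.mem_filter, Finset.mem_univ, true_and]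
    rintro z ⟨rfl, _⟩ ⟨h, _⟩
    exact hab h

/-- From a vertex at distance `j+1` one can step to a neighbour of the base at distance `j`. -/
lemma exists_adj_dist {V : Type*} (G : SimpleGraph V) (hconn : G.Connected)
    {u y : V} {j : ℕ} (h : G.dist u y = j + 1) :
    ∃ x : V, G.Adj u x ∧ G.dist x y = j := by
  obtain ⟨p, hp⟩ := hconn.exists_walk_length_eq_dist u y
  rw [h] at hp
  cases p with
  | nil => simp at hp
  | cons hadj q =>
    rename_i x
    refine ⟨x, hadj, le_antisymm ?_ ?_⟩
    · have := G.dist_le q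
      simp only [SimpleGraph.Walk.length_cons] at hp
      omega
    · have h1 : G.dist u y ≤ G.dist u x + G.dist x y := hconn.dist_triangle
      have h2 : G.dist u x = 1 := SimpleGraph.dist_eq_one_iff_adj.mpr hadj
      omega

/-- with a CAM labeled with respect to distance,
`k = b_0^max ≥ b_1^max ≥ ⋯ ≥ b_{diam Γ - 1}^max ≥ 1`. -/
theorem stmt5 {V : Type*} [Fintype V] (G : SimpleGraph V) (hconn : G.Connected)
    {m : ℕ} (C : Fin m → Fin m → ℕ) (hC : IsCAM G C)
    (k : ℕ) (hk : ∀ v : V, {w : V | G.Adj v w}.ncard = k)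
    (S : ℕ → Finset (Fin m))
    (hSne : ∀ i ≤ G.diam, (S i).Nonempty)
    (hS : ∀ i ≤ G.diam, ∀ (u : V) (P : V → Fin m), IsWitnessingPartition G C u P →
      ∀ v : V, (P v ∈ S i ↔ G.dist u v = i))
    (bmax : ℕ → ℕ)
    (hb : ∀ j : ℕ, bmax j =
      sSup ((fun l : Fin m => ∑ t ∈ S (j + 1), C t l) '' (S j : Set (Fin m)))) :
    bmax 0 = k ∧
    (∀ j : ℕ, j + 1 ≤ G.diam - 1 → bmax (j + 1) ≤ bmax j) ∧
    1 ≤ bmax (G.diam - 1) := by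
  classical
  have hne : Nonempty V := hconn.nonempty
  -- `V` is nontrivial
  have hcard : 2 ≤ Fintype.card V := by
    obtain ⟨hm, hor, -⟩ := hC
    rcases hor with h | ⟨-, h⟩ <;> omega
  have hnt : Nontrivial V := Fintype.one_lt_card_iff_nontrivial.mp hcard
  -- `ediam ≠ ⊤` and `1 ≤ diam`
  have hed : G.ediam ≠ ⊤ := by
    obtain ⟨u, v, huv⟩ := SimpleGraph.exists_edist_eq_ediam_of_finite (G := G)
    rw [← huv]
    exact SimpleGraph.edist_ne_top_iff_reachable.mpr (hconn u v)
  have hd1 : 1 ≤ G.diam := by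
    by_contra h
    have h0 : G.diam = 0 := by omega
    rcases SimpleGraph.diam_eq_zero.mp h0 with h' | h'
    · exact hed h'
    · exact not_subsingleton V h'
  -- key counting fact
  have fact1 : ∀ (u : V) (P : V → Fin m), IsWitnessingPartition G C u P →
      ∀ i ≤ G.diam, ∀ y : V,
      {z : V | G.dist u z = i ∧ G.Adj y z}.ncard = ∑ t ∈ S i, C t (P y) := by
    intro u P hP i hi y
    rw [← count_cells G C u P hP (S i) y]
    congr 1
    ext z
    simp only [Set.mem_setOf_eq]
    rw [hS i hi u P hP z]
  refine ⟨?_, ?_, ?_⟩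
  · -- bmax 0 = k
    rw [hb 0]
    obtain ⟨u⟩ := hne
    obtain ⟨P, hP⟩ := hC.2.2 u
    have hS0 : ∀ l ∈ S 0, l = P u := by
      intro l hl
      obtain ⟨v, rfl⟩ := hP.2.1 l
      have : G.dist u v = 0 := (hS 0 (Nat.zero_le _) u P hP v).mp hl
      have : v = u := (hconn.dist_eq_zero_iff).mp (by rwa [SimpleGraph.dist_comm] at this)
      rw [this]
    have hval : ∑ t ∈ S 1, C t (P u) = k := by
      rw [← fact1 u P hP 1 hd1 u, ← hk u]
      congr 1
      ext z
      simp only [Set.mem_setOf_eq, SimpleGraph.dist_eq_one_iff_adj]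
      tauto
    have himg : (fun l : Fin m => ∑ t ∈ S (0 + 1), C t l) '' (S 0 : Set (Fin m)) = {k} := by
      obtain ⟨l0, hl0⟩ := hSne 0 (Nat.zero_le _)
      ext x
      simp only [Set.mem_image, Set.mem_singleton_iff, Finset.mem_coe]
      constructor
      · rintro ⟨l, hl, rfl⟩
        rw [hS0 l hl]
        exact hval
      · rintro rfl
        exact ⟨l0, hl0, by rw [hS0 l0 hl0]; exact hval⟩
    rw [himg, csSup_singleton]
  · -- monotonicity
    intro j hj
    have hj2 : j + 2 ≤ G.diam := by omega
    rw [hb (j + 1), hb j]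
    apply csSup_le
    · obtain ⟨l, hl⟩ := hSne (j + 1) (by omega)
      exact ⟨_, ⟨l, hl, rfl⟩⟩
    · rintro x ⟨l, hl, rfl⟩
      obtain ⟨u⟩ := hne
      obtain ⟨P, hP⟩ := hC.2.2 u
      obtain ⟨y, rfl⟩ := hP.2.1 l
      have hyd : G.dist u y = j + 1 := (hS (j + 1) (by omega) u P hP y).mp hl
      obtain ⟨xx, hadj, hxy⟩ := exists_adj_dist G hconn hyd
      obtain ⟨Q, hQ⟩ := hC.2.2 xx
      have hQy : Q y ∈ S j := (hS j (by omega) xx Q hQ y).mpr hxy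
      have hsub : {z : V | G.dist u z = j + 2 ∧ G.Adj y z}
          ⊆ {z : V | G.dist xx z = j + 1 ∧ G.Adj y z} := by
        rintro z ⟨hz1, hz2⟩
        refine ⟨?_, hz2⟩
        have h1 : G.dist xx z ≤ G.dist xx y + G.dist y z := hconn.dist_triangle
        have h2 : G.dist y z = 1 := SimpleGraph.dist_eq_one_iff_adj.mpr hz2
        have h3 : G.dist u z ≤ G.dist u xx + G.dist xx z := hconn.dist_triangle
        have h4 : G.dist u xx = 1 := SimpleGraph.dist_eq_one_iff_adj.mpr hadj
        omega
      have hle : ∑ t ∈ S (j + 1 + 1), C t (P y) ≤ ∑ t ∈ S (j + 1), C t (Q y) := by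
        rw [← fact1 u P hP (j + 1 + 1) (by omega) y, ← fact1 xx Q hQ (j + 1) (by omega) y]
        exact Set.ncard_le_ncard hsub (Set.toFinite _)
      refine hle.trans (le_csSup ?_ ⟨Q y, hQy, rfl⟩)
      exact (((S j : Set (Fin m)).toFinite).image _).bddAbove
  · -- 1 ≤ bmax (diam - 1)
    obtain ⟨u, v, huv⟩ := SimpleGraph.exists_dist_eq_diam (G := G)
    have hvu : G.dist v u = (G.diam - 1) + 1 := by
      rw [SimpleGraph.dist_comm, huv]; omega
    obtain ⟨x, hadj, hxu⟩ := exists_adj_dist G hconn hvu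
    have hux : G.dist u x = G.diam - 1 := by rwa [SimpleGraph.dist_comm]
    obtain ⟨P, hP⟩ := hC.2.2 u
    have hPx : P x ∈ S (G.diam - 1) := (hS (G.diam - 1) (by omega) u P hP x).mpr hux
    have hval : 1 ≤ ∑ t ∈ S ((G.diam - 1) + 1), C t (P x) := by
      rw [← fact1 u P hP ((G.diam - 1) + 1) (by omega) x]
      have hvmem : v ∈ {z : V | G.dist u z = (G.diam - 1) + 1 ∧ G.Adj x z} :=
        ⟨by rw [huv]; omega, hadj.symm⟩
      have := Set.ncard_pos (s := {z : V | G.dist u z = (G.diam - 1) + 1 ∧ G.Adj x z})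
        (Set.toFinite _)
      have hpos := this.mpr ⟨v, hvmem⟩
      omega
    rw [hb (G.diam - 1)]
    refine hval.trans (le_csSup ?_ ⟨P x, hPx, rfl⟩)
    exact (((S (G.diam - 1) : Set (Fin m)).toFinite).image _).bddAbove
end

section
/- Let Γ be a connected highly-regular graph with CAM C = [c_{i,j}]_{1≤i,j≤m} and valency k, whose CAM labeling is with respect to distance via sets S_0, S_1, …, S_{diam(Γ)}. Then 1 = c_1^min ≤ c_2^min ≤ ⋯ ≤ c_{diam(Γ)}^min ≤ k. -/
private lemma sum_card_aux {V : Type*} [Fintype V] (G : SimpleGraph V) {m : ℕ}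
    (C : Fin m → Fin m → ℕ) (u : V) (P : V → Fin m)
    (hP : IsWitnessingPartition G C u P) (v : V) (T : Finset (Fin m)) :
    ∑ t ∈ T, C t (P v) = {z : V | P z ∈ T ∧ G.Adj v z}.ncard := by
  classical
  have key : ∀ (p : V → Prop) [DecidablePred p],
      {z : V | p z}.ncard = (Finset.univ.filter p).card := by
    intro p _
    rw [Set.ncard_eq_toFinset_card', Set.toFinset_setOf]
  have h1 : ∀ t : Fin m, C t (P v) =
      (Finset.univ.filter (fun z : V => P z = t ∧ G.Adj v z)).card := by
    intro t
    rw [← key, ← hP.2.2 t (P v) v rfl]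
  rw [key]
  have hfib : (Finset.univ.filter (fun z : V => P z ∈ T ∧ G.Adj v z)).card =
      ∑ t ∈ T, ((Finset.univ.filter (fun z : V => P z ∈ T ∧ G.Adj v z)).filter
        (fun z => P z = t)).card := by
    apply Finset.card_eq_sum_card_fiberwise
    intro x hx
    exact (Finset.mem_filter.mp hx).2.1
  rw [hfib]
  apply Finset.sum_congr rfl
  intro t ht
  rw [h1 t]
  congr 1
  ext z
  simp only [Finset.mem_filter, Finset.mem_univ, true_and]
  constructor
  · rintro ⟨hz, ha⟩
    exact ⟨⟨hz ▸ ht, ha⟩, hz⟩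
  · rintro ⟨⟨-, ha⟩, hz⟩
    exact ⟨hz, ha⟩

/-- with a CAM labeled with respect to distance,
`1 = c_1^min ≤ c_2^min ≤ ⋯ ≤ c_{diam Γ}^min ≤ k`. -/
theorem stmt6 {V : Type*} [Fintype V] (G : SimpleGraph V) (hconn : G.Connected)
    {m : ℕ} (C : Fin m → Fin m → ℕ) (hC : IsCAM G C)
    (k : ℕ) (hk : ∀ v : V, {w : V | G.Adj v w}.ncard = k)
    (S : ℕ → Finset (Fin m))
    (hSne : ∀ i ≤ G.diam, (S i).Nonempty)
    (hS : ∀ i ≤ G.diam, ∀ (u : V) (P : V → Fin m), IsWitnessingPartition G C u P →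
      ∀ v : V, (P v ∈ S i ↔ G.dist u v = i))
    (cmin : ℕ → ℕ)
    (hc : ∀ i : ℕ, cmin i =
      sInf ((fun l : Fin m => ∑ t ∈ S (i - 1), C t l) '' (S i : Set (Fin m)))) :
    cmin 1 = 1 ∧
    (∀ i : ℕ, 1 ≤ i → i + 1 ≤ G.diam → cmin i ≤ cmin (i + 1)) ∧
    cmin G.diam ≤ k := by
  classical
  obtain ⟨hm2, hmcard, hparts⟩ := hC
  have hcard : 2 ≤ Fintype.card V := by rcases hmcard with h | ⟨h1, h2⟩ <;> omega
  haveI : Nontrivial V := Fintype.one_lt_card_iff_nontrivial.mp (by omega)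
  haveI : Nonempty V := inferInstance
  -- the extended diameter is finite
  have hediam : G.ediam ≠ ⊤ := by
    obtain ⟨a, b, hab⟩ := SimpleGraph.exists_edist_eq_ediam_of_finite (G := G)
    rw [← hab]
    exact SimpleGraph.edist_ne_top_iff_reachable.mpr (hconn a b)
  have hdiam1 : 1 ≤ G.diam := by
    obtain ⟨x, y, hxy⟩ := exists_pair_ne V
    have h1 : 0 < G.dist x y := hconn.pos_dist_of_ne hxy
    have h2 : G.dist x y ≤ G.diam := SimpleGraph.dist_le_diam hediam
    omega
  -- key counting identity
  have key : ∀ i ≤ G.diam, ∀ (u : V) (P : V → Fin m), IsWitnessingPartition G C u P →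
      ∀ v : V, ∑ t ∈ S i, C t (P v) =
        {z : V | G.dist u z = i ∧ G.Adj v z}.ncard := by
    intro i hi u P hP v
    rw [sum_card_aux G C u P hP v (S i)]
    congr 1
    ext z
    simp only [Set.mem_setOf_eq]
    rw [hS i hi u P hP z]
  -- fix a base vertex and partition
  obtain ⟨u₀⟩ := ‹Nonempty V›
  obtain ⟨P₀, hP₀⟩ := hparts u₀
  refine ⟨?_, ?_, ?_⟩
  · -- cmin 1 = 1
    rw [hc 1]
    have hall : ∀ l ∈ S 1, ∑ t ∈ S (1 - 1), C t l = 1 := by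
      intro l hl
      obtain ⟨v, hv⟩ := hP₀.2.1 l
      have hdist : G.dist u₀ v = 1 := (hS 1 hdiam1 u₀ P₀ hP₀ v).mp (hv ▸ hl)
      have hadj : G.Adj v u₀ := (SimpleGraph.dist_eq_one_iff_adj.mp hdist).symm
      have := key 0 (by omega) u₀ P₀ hP₀ v
      rw [hv] at this
      simp only [Nat.sub_self]
      rw [this]
      have hset : {z : V | G.dist u₀ z = 0 ∧ G.Adj v z} = {u₀} := by
        ext z
        simp only [Set.mem_setOf_eq, Set.mem_singleton_iff]
        constructor
        · rintro ⟨hz, -⟩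
          exact (hconn.dist_eq_zero_iff.mp hz).symm
        · rintro rfl
          exact ⟨SimpleGraph.dist_self, hadj⟩
      rw [hset, Set.ncard_singleton]
    have hne : (S 1).Nonempty := hSne 1 hdiam1
    obtain ⟨l₀, hl₀⟩ := hne
    apply le_antisymm
    · exact Nat.sInf_le ⟨l₀, by simpa using hl₀, hall l₀ hl₀⟩
    · apply le_csInf ⟨_, Set.mem_image_of_mem _ (Finset.mem_coe.mpr hl₀)⟩
      rintro x ⟨l, hl, rfl⟩
      exact (hall l (by simpa using hl)).ge
  · -- monotonicity
    intro i hi1 hidiam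
    rw [hc i, hc (i + 1)]
    have hSi1ne : ((fun l : Fin m => ∑ t ∈ S (i + 1 - 1), C t l) ''
        (S (i + 1) : Set (Fin m))).Nonempty := by
      obtain ⟨l, hl⟩ := hSne (i + 1) hidiam
      exact ⟨_, l, by simpa using hl, rfl⟩
    obtain ⟨l, hl, hleq⟩ := Nat.sInf_mem hSi1ne
    rw [← hleq]
    have hlS : l ∈ S (i + 1) := by simpa using hl
    obtain ⟨v, hv⟩ := hP₀.2.1 l
    have hdist : G.dist u₀ v = i + 1 := (hS (i + 1) hidiam u₀ P₀ hP₀ v).mp (hv ▸ hlS)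
    -- get a neighbour of u₀ on a geodesic to v
    obtain ⟨p, hp⟩ := hconn.exists_walk_length_eq_dist u₀ v
    rw [hdist] at hp
    obtain ⟨b, hadj, q, rfl⟩ : ∃ (b : V) (_ : G.Adj u₀ b) (q : G.Walk b v),
        p = SimpleGraph.Walk.cons ‹G.Adj u₀ b› q := by
      cases p with
      | nil => simp at hp
      | cons h q => exact ⟨_, h, q, rfl⟩
    have hq : q.length = i := by simpa using hp
    have hdub : G.dist u₀ b = 1 := SimpleGraph.dist_eq_one_iff_adj.mpr hadj
    have hdbv : G.dist b v = i := by
      have h1 : G.dist b v ≤ i := hq ▸ SimpleGraph.dist_le q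
      have h2 : G.dist u₀ v ≤ G.dist u₀ b + G.dist b v := hconn.dist_triangle
      omega
    obtain ⟨P', hP'⟩ := hparts b
    have hPv : P' v ∈ S i := (hS i (by omega) b P' hP' v).mpr hdbv
    have hstep : sInf ((fun l : Fin m => ∑ t ∈ S (i - 1), C t l) ''
        (S i : Set (Fin m))) ≤ ∑ t ∈ S (i - 1), C t (P' v) :=
      Nat.sInf_le ⟨P' v, by simpa using hPv, rfl⟩
    refine hstep.trans ?_
    have hL : ∑ t ∈ S (i - 1), C t (P' v) =
        {z : V | G.dist b z = i - 1 ∧ G.Adj v z}.ncard :=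
      key (i - 1) (by omega) b P' hP' v
    have hR : ∑ t ∈ S (i + 1 - 1), C t l =
        {z : V | G.dist u₀ z = i ∧ G.Adj v z}.ncard := by
      have := key i (by omega) u₀ P₀ hP₀ v
      rw [hv] at this
      simpa using this
    rw [hL, show (fun l : Fin m => ∑ t ∈ S (i + 1 - 1), C t l) l
      = ∑ t ∈ S (i + 1 - 1), C t l from rfl, hR]
    apply Set.ncard_le_ncard _ (Set.toFinite _)
    rintro z ⟨hz1, hz2⟩
    refine ⟨?_, hz2⟩
    have h1 : G.dist u₀ z ≤ G.dist u₀ b + G.dist b z := hconn.dist_triangle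
    have h2 : G.dist u₀ v ≤ G.dist u₀ z + G.dist z v := hconn.dist_triangle
    have h3 : G.dist z v = 1 := SimpleGraph.dist_eq_one_iff_adj.mpr hz2.symm
    omega
  · -- cmin diam ≤ k
    rw [hc G.diam]
    obtain ⟨l, hl⟩ := hSne G.diam le_rfl
    obtain ⟨v, hv⟩ := hP₀.2.1 l
    have hstep : sInf ((fun l : Fin m => ∑ t ∈ S (G.diam - 1), C t l) ''
        (S G.diam : Set (Fin m))) ≤ ∑ t ∈ S (G.diam - 1), C t l :=
      Nat.sInf_le ⟨l, by simpa using hl, rfl⟩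
    refine hstep.trans ?_
    have hL : ∑ t ∈ S (G.diam - 1), C t l =
        {z : V | G.dist u₀ z = G.diam - 1 ∧ G.Adj v z}.ncard := by
      have := key (G.diam - 1) (by omega) u₀ P₀ hP₀ v
      rw [hv] at this
      exact this
    rw [hL, ← hk v]
    apply Set.ncard_le_ncard _ (Set.toFinite _)
    rintro z ⟨-, hz⟩
    exact hz
end

section
/- Let Γ be a connected highly-regular graph with CAM C = [c_{i,j}]_{1≤i,j≤m} and valency k, whose CAM labeling is with respect to distance via sets S_0, S_1, …, S_{diam(Γ)}, and suppose Γ satisfies condition (⋆). Then for all integers i ≥ 1 and j ≥ 0 with i + j ≤ diam(Γ), one has c_i^max ≤ b_j^max. -/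
lemma count_sum_aux {V : Type*} [Fintype V] (G : SimpleGraph V) {m : ℕ}
    (C : Fin m → Fin m → ℕ) (u : V) (P : V → Fin m)
    (hP : IsWitnessingPartition G C u P) (z : V) (T : Finset (Fin m)) :
    ∑ t ∈ T, C t (P z) = {w : V | P w ∈ T ∧ G.Adj z w}.ncard := by
  classical
  have hset : {w : V | P w ∈ T ∧ G.Adj z w}
      = ↑(Finset.univ.filter (fun w => P w ∈ T ∧ G.Adj z w)) := by
    ext w; simp
  rw [hset, Set.ncard_coe_finset]
  rw [Finset.card_eq_sum_card_fiberwise (f := P) (t := T)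
    (fun w hw => (Finset.mem_filter.mp hw).2.1)]
  refine Finset.sum_congr rfl fun t ht => ?_
  have := hP.2.2 t (P z) z rfl
  rw [← this]
  have hs2 : {w : V | P w = t ∧ G.Adj z w}
      = ↑((Finset.univ.filter (fun w => P w ∈ T ∧ G.Adj z w)).filter (fun w => P w = t)) := by
    ext w
    simp only [Set.mem_setOf_eq, Finset.coe_filter, Finset.mem_filter, Finset.mem_univ,
      true_and, Set.mem_setOf_eq]
    constructor
    · rintro ⟨h1, h2⟩; exact ⟨⟨h1 ▸ ht, h2⟩, h1⟩
    · rintro ⟨⟨_, h2⟩, h1⟩; exact ⟨h1, h2⟩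
  rw [hs2, Set.ncard_coe_finset]

/-- with a CAM labeled with respect to distance, under condition (⋆),
if `i ≥ 1` and `i + j ≤ diam Γ` then `c_i^max ≤ b_j^max`. -/
theorem stmt7 {V : Type*} [Fintype V] (G : SimpleGraph V) (hconn : G.Connected)
    {m : ℕ} (C : Fin m → Fin m → ℕ) (hC : IsCAM G C)
    (k : ℕ) (hk : ∀ v : V, {w : V | G.Adj v w}.ncard = k)
    (S : ℕ → Finset (Fin m))
    (hSne : ∀ i ≤ G.diam, (S i).Nonempty)
    (hS : ∀ i ≤ G.diam, ∀ (u : V) (P : V → Fin m), IsWitnessingPartition G C u P →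
      ∀ v : V, (P v ∈ S i ↔ G.dist u v = i))
    (hstar : ∀ (u : V) (i : ℕ), i + 1 ≤ G.diam → ∀ x : V, G.dist u x = i →
      ∃ z : V, G.Adj x z ∧ G.dist u z = i + 1)
    (bmax : ℕ → ℕ)
    (hb : ∀ j : ℕ, bmax j =
      sSup ((fun l : Fin m => ∑ t ∈ S (j + 1), C t l) '' (S j : Set (Fin m))))
    (cmax : ℕ → ℕ)
    (hc : ∀ i : ℕ, cmax i =
      sSup ((fun l : Fin m => ∑ t ∈ S (i - 1), C t l) '' (S i : Set (Fin m)))) :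
    ∀ i j : ℕ, 1 ≤ i → i + j ≤ G.diam → cmax i ≤ bmax j := by
  intro i j hi hij
  classical
  rw [hc, hb]
  have hij' : i ≤ G.diam := le_trans (Nat.le_add_right i j) hij
  have hj1 : j + 1 ≤ G.diam := by omega
  have hjle : j ≤ G.diam := by omega
  have him : i - 1 ≤ G.diam := by omega
  apply csSup_le
  · exact ((Finset.coe_nonempty.mpr (hSne i hij')).image _)
  · rintro v ⟨l, hl, rfl⟩
    obtain ⟨y⟩ := hconn.nonempty
    obtain ⟨Py, hPy⟩ := hC.2.2 y
    obtain ⟨z, hz⟩ := hPy.2.1 l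
    have hdyz : G.dist y z = i := (hS i hij' y Py hPy z).mp (hz ▸ hl)
    -- extend a geodesic beyond z
    have ext : ∀ s, s ≤ j → ∃ x : V, G.dist y x = i + s ∧ G.dist z x = s := by
      intro s
      induction s with
      | zero => intro _; exact ⟨z, by simpa using hdyz, by simp⟩
      | succ s ih =>
        intro hs
        obtain ⟨x, hyx, hzx⟩ := ih (by omega)
        obtain ⟨x', hadj, hyx'⟩ := hstar y (i + s) (by omega) x hyx
        refine ⟨x', hyx', le_antisymm ?_ ?_⟩
        · calc G.dist z x' ≤ G.dist z x + G.dist x x' := hconn.dist_triangle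
            _ ≤ s + 1 := by
              rw [hzx, (SimpleGraph.dist_eq_one_iff_adj).mpr hadj]
        · have h1 : G.dist y x' ≤ G.dist y z + G.dist z x' := hconn.dist_triangle
          omega
    obtain ⟨x, hyx, hzx⟩ := ext j le_rfl
    obtain ⟨Px, hPx⟩ := hC.2.2 x
    have hl' : Px z ∈ S j := (hS j hjle x Px hPx z).mpr (by rw [SimpleGraph.dist_comm]; exact hzx)
    have hcount1 : ∑ t ∈ S (i - 1), C t l
        = {w : V | G.Adj z w ∧ G.dist y w = i - 1}.ncard := by
      rw [← hz, count_sum_aux G C y Py hPy z]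
      congr 1
      ext w
      simp only [Set.mem_setOf_eq, hS (i-1) him y Py hPy w]
      tauto
    have hcount2 : ∑ t ∈ S (j + 1), C t (Px z)
        = {w : V | G.Adj z w ∧ G.dist x w = j + 1}.ncard := by
      rw [count_sum_aux G C x Px hPx z]
      congr 1
      ext w
      simp only [Set.mem_setOf_eq, hS (j+1) hj1 x Px hPx w]
      tauto
    have hsub : {w : V | G.Adj z w ∧ G.dist y w = i - 1}
        ⊆ {w : V | G.Adj z w ∧ G.dist x w = j + 1} := by
      rintro w ⟨hadj, hdw⟩
      refine ⟨hadj, le_antisymm ?_ ?_⟩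
      · have h0 : G.dist x w ≤ G.dist x z + G.dist z w := hconn.dist_triangle
        have h2 : G.dist x z = G.dist z x := SimpleGraph.dist_comm
        have h3 : G.dist z w = 1 := SimpleGraph.dist_eq_one_iff_adj.mpr hadj
        omega
      · have h1 : G.dist y x ≤ G.dist y w + G.dist w x := hconn.dist_triangle
        have h2 : G.dist w x = G.dist x w := SimpleGraph.dist_comm
        omega
    calc ∑ t ∈ S (i - 1), C t l
        ≤ ∑ t ∈ S (j + 1), C t (Px z) := by
          rw [hcount1, hcount2]
          exact Set.ncard_le_ncard hsub (Set.toFinite _)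
      _ ≤ sSup ((fun l : Fin m => ∑ t ∈ S (j + 1), C t l) '' (S j : Set (Fin m))) := by
          exact le_csSup (((S j : Set (Fin m)).toFinite.image _).bddAbove)
            ⟨Px z, hl', rfl⟩
end

section
/- A finite simple graph Γ is a highly-regular graph if and only if its complement Γ̄ is a highly-regular graph. -/
/-!
Double counting the edges between two cells of a witnessing partition gives
`|V_i| c_{j,i} = |V_j| c_{i,j}`. Hence the size of every cell reached from the base cell `{u}`
through nonzero entries `c_{i,j}` is determined by `C` alone, independently of `u`.
If every cell is reached in this way, the same partitions witness for `Gᶜ` the CAM with entries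
`|V_i| - c_{i,j} - δ_{i,j}`. Otherwise no edge joins a reached cell to an unreached one, so merging
all unreached cells into one gives another CAM of `G`, no larger than `C` (the merged cell sees
the whole neighbourhood of its vertices, and `G` is regular), and all its cell sizes are uniform.
-/

open Finset

section

variable {V ι : Type*}

theorem SimpleGraph.ncard_inter_neighborSet_compl_add [Finite V] (G : SimpleGraph V)
    (s : Set V) (y : V) :
    (s ∩ Gᶜ.neighborSet y).ncard + (s ∩ G.neighborSet y).ncard + (s ∩ {y}).ncard = s.ncard := by
  have hsplit : s \ {y} = (s ∩ Gᶜ.neighborSet y) ∪ (s ∩ G.neighborSet y) := by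
    rw [← Set.inter_union_distrib_left, Set.union_comm, G.neighborSet_union_compl_neighborSet_eq,
      Set.sdiff_eq]
  have hdisj : Disjoint (s ∩ Gᶜ.neighborSet y) (s ∩ G.neighborSet y) :=
    ((G.compl_neighborSet_disjoint y).symm.mono Set.inter_subset_right Set.inter_subset_right)
  rw [← Set.ncard_union_eq hdisj, ← hsplit, add_comm, Set.ncard_inter_add_ncard_sdiff_eq_ncard]

theorem sum_ncard_inter_fiber [Fintype ι] [Finite V] (s : Set V) (f : V → ι) :
    ∑ i, (s ∩ f ⁻¹' {i}).ncard = s.ncard := by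
  classical
  have := Fintype.ofFinite V
  rw [Set.ncard_eq_toFinset_card', card_eq_sum_card_fiberwise (f := f) (t := univ)
    fun _ _ => mem_univ _]
  refine sum_congr rfl fun i _ => ?_
  rw [Set.ncard_eq_toFinset_card']
  congr 1
  ext
  simp

theorem ncard_fiber_none_eq [Finite ι] [Finite V] {Q Q' : V → Option ι}
    (h : ∀ i, (Q ⁻¹' {some i}).ncard = (Q' ⁻¹' {some i}).ncard) :
    (Q ⁻¹' {none}).ncard = (Q' ⁻¹' {none}).ncard := by
  have := Fintype.ofFinite ι
  have hQ := sum_ncard_inter_fiber Set.univ Q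
  have hQ' := sum_ncard_inter_fiber Set.univ Q'
  simp only [Fintype.sum_option, Set.univ_inter] at hQ hQ'
  simp only [h] at hQ
  omega

/-- `IsWitnessingPartition` with cells indexed by an arbitrary type, `o` indexing the cell `{u}`. -/
structure IsCellPartition (G : SimpleGraph V) (C : ι → ι → ℕ) (o : ι) (u : V) (P : V → ι) :
    Prop where
  eq_base_iff : ∀ v, P v = o ↔ v = u
  surjective : Function.Surjective P
  ncard_adj : ∀ i y, {z | P z = i ∧ G.Adj y z}.ncard = C i (P y)

def CellReachable (C : ι → ι → ℕ) (o : ι) : ι → Prop :=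
  Relation.ReflTransGen (fun a b => C a b ≠ 0) o

/-- In `Gᶜ`, a vertex of cell `j` is adjacent to all `N i` vertices of cell `i` except its
`C i j` neighbours in `G` and itself. -/
def complMatrix [DecidableEq ι] (C : ι → ι → ℕ) (N : ι → ℕ) (i j : ι) : ℕ :=
  N i - C i j - if i = j then 1 else 0

open Classical in
noncomputable def lumpCells (C : ι → ι → ℕ) (o : ι) (P : V → ι) (v : V) :
    Option {j // CellReachable C o j} :=
  if h : CellReachable C o (P v) then some ⟨P v, h⟩ else none

/-- `d` is the common degree of the vertices: the merged cell `none` contains every neighbour of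
each of its vertices. -/
def lumpMatrix (C : ι → ι → ℕ) (o : ι) (d : ℕ) :
    Option {j // CellReachable C o j} → Option {j // CellReachable C o j} → ℕ
  | some i, some j => C i j
  | none, none => d
  | some _, none => 0
  | none, some _ => 0

section lumpCells

variable {C : ι → ι → ℕ} {o : ι} {P : V → ι} {v : V}

theorem lumpCells_eq_some_iff {i : {j // CellReachable C o j}} :
    lumpCells C o P v = some i ↔ P v = i := by
  unfold lumpCells
  split_ifs with h
  · simp [Subtype.ext_iff]
  · exact iff_of_false nofun fun hv => h (hv ▸ i.2)

theorem lumpCells_eq_none_iff : lumpCells C o P v = none ↔ ¬ CellReachable C o (P v) := by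
  unfold lumpCells
  split_ifs with h <;> simp [h]

end lumpCells

namespace IsWitnessingPartition

variable [Fintype V] {G : SimpleGraph V} {m : ℕ} {C : Fin m → Fin m → ℕ} {u : V} {P : V → Fin m}

theorem isCellPartition [NeZero m] (hP : IsWitnessingPartition G C u P) :
    IsCellPartition G C 0 u P where
  eq_base_iff v := by rw [← hP.1 v, Fin.ext_iff, Fin.val_zero]
  surjective := hP.2.1
  ncard_adj i y := hP.2.2 i (P y) y rfl

end IsWitnessingPartition

namespace IsCellPartition

variable {G : SimpleGraph V} {C : ι → ι → ℕ} {o : ι} {u : V} {P : V → ι}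

theorem isWitnessingPartition [Fintype V] {m : ℕ} (hP : IsCellPartition G C o u P)
    (e : ι ≃ Fin m) (he : (e o : ℕ) = 0) :
    IsWitnessingPartition G (fun i j => C (e.symm i) (e.symm j)) u (e ∘ P) := by
  refine ⟨fun v => ?_, e.surjective.comp hP.surjective, fun i j y hy => ?_⟩
  · rw [Function.comp_apply, ← he, Fin.val_inj, e.apply_eq_iff_eq]
    exact hP.eq_base_iff v
  · simp only [Function.comp_apply, ← e.eq_symm_apply] at hy ⊢
    rw [hP.ncard_adj, hy]

theorem apply_base (hP : IsCellPartition G C o u P) : P u = o :=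
  (hP.eq_base_iff u).2 rfl

theorem ncard_fiber_base (hP : IsCellPartition G C o u P) : (P ⁻¹' {o}).ncard = 1 :=
  Set.ncard_eq_one.2 ⟨u, Set.ext hP.eq_base_iff⟩

theorem ne_zero_of_adj [Finite V] (hP : IsCellPartition G C o u P) {y z : V} (h : G.Adj y z) :
    C (P y) (P z) ≠ 0 := by
  rw [← hP.ncard_adj]
  exact Set.ncard_ne_zero_of_mem (a := y) ⟨rfl, h.symm⟩

theorem cellReachable_of_adj [Finite V] (hP : IsCellPartition G C o u P) {y z : V}
    (h : G.Adj y z) (hy : CellReachable C o (P y)) : CellReachable C o (P z) :=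
  hy.tail (hP.ne_zero_of_adj h)

theorem ncard_fiber_mul_eq [Finite V] (hP : IsCellPartition G C o u P) (i j : ι) :
    (P ⁻¹' {i}).ncard * C j i = (P ⁻¹' {j}).ncard * C i j := by
  classical
  have := Fintype.ofFinite V
  have hcount : ∀ k y, #{z | P z = k ∧ G.Adj y z} = C k (P y) := fun k y => by
    rw [← hP.ncard_adj, ← Set.ncard_coe_finset]
    simp
  simp only [Set.ncard_eq_toFinset_card']
  refine card_mul_eq_card_mul G.Adj (fun a ha => ?_) (fun b hb => ?_)
  · rw [Set.mem_toFinset, Set.mem_preimage, Set.mem_singleton_iff] at ha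
    rw [← ha, ← hcount]
    congr 1
    ext
    simp
  · rw [Set.mem_toFinset, Set.mem_preimage, Set.mem_singleton_iff] at hb
    rw [← hb, ← hcount]
    congr 1
    ext
    simp [G.adj_comm]

theorem ncard_fiber_eq_of_cellReachable [Finite V] (hP : IsCellPartition G C o u P) {u' : V}
    {P' : V → ι} (hP' : IsCellPartition G C o u' P') {j : ι} (hj : CellReachable C o j) :
    (P ⁻¹' {j}).ncard = (P' ⁻¹' {j}).ncard := by
  induction hj with
  | refl => rw [hP.ncard_fiber_base, hP'.ncard_fiber_base]
  | @tail a b _ hab ih =>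
    refine Nat.eq_of_mul_eq_mul_right (Nat.pos_of_ne_zero hab) ?_
    rw [← hP.ncard_fiber_mul_eq, ← hP'.ncard_fiber_mul_eq, ih]

theorem ncard_adj_eq_sum [Fintype ι] [Finite V] (hP : IsCellPartition G C o u P) (y : V) :
    {z | G.Adj y z}.ncard = ∑ i, C i (P y) := by
  rw [← sum_ncard_inter_fiber _ P]
  refine sum_congr rfl fun i _ => ?_
  rw [← hP.ncard_adj, Set.inter_comm]
  rfl

theorem compl [DecidableEq ι] [Finite V] (hP : IsCellPartition G C o u P) {N : ι → ℕ}
    (hN : ∀ i, (P ⁻¹' {i}).ncard = N i) : IsCellPartition Gᶜ (complMatrix C N) o u P where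
  eq_base_iff := hP.eq_base_iff
  surjective := hP.surjective
  ncard_adj i y := by
    have hself : (P ⁻¹' {i} ∩ {y}).ncard = if i = P y then 1 else 0 := by
      split_ifs with hi
      · rw [Set.inter_eq_right.2 (Set.singleton_subset_iff.2 (show y ∈ P ⁻¹' {i} from hi.symm)),
          Set.ncard_singleton]
      · rw [Set.inter_singleton_eq_empty.2 (show y ∉ P ⁻¹' {i} from Ne.symm hi), Set.ncard_empty]
    have hG : (P ⁻¹' {i} ∩ G.neighborSet y).ncard = C i (P y) := hP.ncard_adj i y
    have hsplit := G.ncard_inter_neighborSet_compl_add (P ⁻¹' {i}) y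
    rw [hN, hself, hG] at hsplit
    show (P ⁻¹' {i} ∩ Gᶜ.neighborSet y).ncard = N i - C i (P y) - if i = P y then 1 else 0
    omega

theorem lump [Finite V] (hP : IsCellPartition G C o u P) {d : ℕ}
    (hd : ∀ y, {z | G.Adj y z}.ncard = d) (hout : ∃ j, ¬ CellReachable C o j) :
    IsCellPartition G (lumpMatrix C o d) (some ⟨o, .refl⟩) u (lumpCells C o P) where
  eq_base_iff v := by
    rw [lumpCells_eq_some_iff]
    exact hP.eq_base_iff v
  surjective := by
    rintro (_ | i)
    · obtain ⟨j, hj⟩ := hout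
      obtain ⟨v, rfl⟩ := hP.surjective j
      exact ⟨v, lumpCells_eq_none_iff.2 hj⟩
    · obtain ⟨v, hv⟩ := hP.surjective i
      exact ⟨v, lumpCells_eq_some_iff.2 hv⟩
  ncard_adj k y := by
    have hreach {z : V} (h : G.Adj y z) : CellReachable C o (P y) ↔ CellReachable C o (P z) :=
      ⟨hP.cellReachable_of_adj h, hP.cellReachable_of_adj h.symm⟩
    rcases k with _ | i <;> rcases hy : lumpCells C o P y with _ | j
    · rw [lumpMatrix, ← hd y]
      congr 1
      ext z
      simp only [Set.mem_ofPred_eq, lumpCells_eq_none_iff, and_iff_right_iff_imp]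
      exact fun h => (hreach h).not.1 (lumpCells_eq_none_iff.1 hy)
    · rw [lumpMatrix, Set.ncard_eq_zero, Set.eq_empty_iff_forall_notMem]
      rintro z ⟨hz, h⟩
      exact lumpCells_eq_none_iff.1 hz ((hreach h).1 (lumpCells_eq_some_iff.1 hy ▸ j.2))
    · rw [lumpMatrix, Set.ncard_eq_zero, Set.eq_empty_iff_forall_notMem]
      rintro z ⟨hz, h⟩
      exact lumpCells_eq_none_iff.1 hy ((hreach h).2 (lumpCells_eq_some_iff.1 hz ▸ i.2))
    · rw [lumpMatrix, ← lumpCells_eq_some_iff.1 hy, ← hP.ncard_adj]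
      simp only [lumpCells_eq_some_iff]

theorem ncard_lumpCells_fiber_eq [Finite ι] [Finite V] (hP : IsCellPartition G C o u P)
    {u' : V} {P' : V → ι} (hP' : IsCellPartition G C o u' P')
    (k : Option {j // CellReachable C o j}) :
    (lumpCells C o P ⁻¹' {k}).ncard = (lumpCells C o P' ⁻¹' {k}).ncard := by
  have hsome (i : {j // CellReachable C o j}) :
      (lumpCells C o P ⁻¹' {some i}).ncard = (lumpCells C o P' ⁻¹' {some i}).ncard := by
    have hfiber (Q : V → ι) : lumpCells C o Q ⁻¹' {some i} = Q ⁻¹' {i.1} :=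
      Set.ext fun _ => lumpCells_eq_some_iff
    rw [hfiber, hfiber]
    exact hP.ncard_fiber_eq_of_cellReachable hP' i.2
  cases k with
  | none => exact ncard_fiber_none_eq hsome
  | some i => exact hsome i

end IsCellPartition

section

variable [Fintype V] [Fintype ι] {G : SimpleGraph V} {C : ι → ι → ℕ} {o : ι}

theorem isHighlyRegular_of_isCellPartition (h2 : 2 ≤ Fintype.card ι)
    (hn : Fintype.card ι < Fintype.card V ∨ Fintype.card ι = Fintype.card V ∧ Fintype.card V = 2)
    (h : ∀ u, ∃ P, IsCellPartition G C o u P) : IsHighlyRegular G := by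
  let e₀ := Fintype.equivFin ι
  let e := e₀.trans (Equiv.swap (e₀ o) ⟨0, by omega⟩)
  refine ⟨_, fun i j => C (e.symm i) (e.symm j), h2, hn, fun u => ?_⟩
  obtain ⟨P, hP⟩ := h u
  exact ⟨_, hP.isWitnessingPartition e (by simp [e])⟩

theorem isHighlyRegular_compl_of_ncard_fiber_eq [DecidableEq ι] (h2 : 2 ≤ Fintype.card ι)
    (hn : Fintype.card ι < Fintype.card V ∨ Fintype.card ι = Fintype.card V ∧ Fintype.card V = 2)
    {P : V → V → ι} (hP : ∀ u, IsCellPartition G C o u (P u))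
    (hsize : ∀ u u' i, (P u ⁻¹' {i}).ncard = (P u' ⁻¹' {i}).ncard) : IsHighlyRegular Gᶜ := by
  obtain ⟨u₀⟩ : Nonempty V := Fintype.card_pos_iff.1 (by omega)
  exact isHighlyRegular_of_isCellPartition (C := complMatrix C fun i => (P u₀ ⁻¹' {i}).ncard)
    h2 hn fun u => ⟨P u, (hP u).compl (hsize u u₀)⟩

end

theorem IsHighlyRegular.compl [Fintype V] {G : SimpleGraph V} (h : IsHighlyRegular G) :
    IsHighlyRegular Gᶜ := by
  classical
  obtain ⟨m, C, hm, hmn, hW⟩ := h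
  have : NeZero m := ⟨by omega⟩
  choose P hP using fun u => (hW u).imp fun _ hPu => hPu.isCellPartition
  by_cases hall : ∀ j, CellReachable C 0 j
  · exact isHighlyRegular_compl_of_ncard_fiber_eq (by simpa) (by simpa) hP
      fun u u' j => (hP u).ncard_fiber_eq_of_cellReachable (hP u') (hall j)
  obtain ⟨j, hj⟩ := not_forall.1 hall
  have hd (y : V) : {z | G.Adj y z}.ncard = ∑ i, C i 0 := by
    rw [(hP y).ncard_adj_eq_sum, (hP y).apply_base]
  have hcard : Fintype.card {j // CellReachable C 0 j} < m := by
    simpa using Fintype.card_subtype_lt hj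
  have hpos : 0 < Fintype.card {j // CellReachable C 0 j} :=
    Fintype.card_pos_iff.2 ⟨⟨0, .refl⟩⟩
  refine isHighlyRegular_compl_of_ncard_fiber_eq (P := fun u => lumpCells C 0 (P u))
    ?_ ?_ (fun u => (hP u).lump hd ⟨j, hj⟩) fun u u' => (hP u).ncard_lumpCells_fiber_eq (hP u')
  all_goals rw [Fintype.card_option]; omega

end

/-- A finite simple graph is highly-regular iff its complement is. -/
theorem stmt8 {V : Type*} [Fintype V] (G : SimpleGraph V) :
    IsHighlyRegular G ↔ IsHighlyRegular Gᶜ :=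
  ⟨IsHighlyRegular.compl, fun h => compl_compl G ▸ h.compl⟩
end

section
/- If Γ₁ and Γ₂ are highly-regular graphs, then the Cartesian (box) product Γ₁ □ Γ₂ is a highly-regular graph. -/
lemma ncard_setOf_filter {α : Type*} [Fintype α] (p : α → Prop) [DecidablePred p] :
    {z : α | p z}.ncard = (Finset.univ.filter p).card := by
  rw [Set.ncard_eq_toFinset_card']
  simp [Set.toFinset_setOf]

instance boxProdAdjDec {α β : Type*} (G : SimpleGraph α) (H : SimpleGraph β)
    [DecidableEq α] [DecidableEq β] [DecidableRel G.Adj] [DecidableRel H.Adj] :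
    DecidableRel (G.boxProd H).Adj := fun x y =>
  decidable_of_iff _ (SimpleGraph.boxProd_adj (x := x) (y := y)).symm

/-- concrete HR for decidable graphs on Fin 2 × Fin 2, with m = 3 -/
lemma hr_concrete (Gc : SimpleGraph (Fin 2 × Fin 2)) [DecidableRel Gc.Adj]
    (C : Fin 3 → Fin 3 → ℕ)
    (h : ∀ u : Fin 2 × Fin 2, ∃ P : Fin 2 × Fin 2 → Fin 3,
      (∀ v, (P v : ℕ) = 0 ↔ v = u) ∧ (∀ t, ∃ v, P v = t) ∧
      (∀ (i j : Fin 3) (y), P y = j →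
        (Finset.univ.filter fun z => P z = i ∧ Gc.Adj y z).card = C i j)) :
    IsHighlyRegular Gc := by
  refine ⟨3, C, by norm_num, Or.inl (by simp), fun u => ?_⟩
  obtain ⟨P, h1, h2, h3⟩ := h u
  exact ⟨P, h1, h2, fun i j y hy => by
    rw [ncard_setOf_filter]; exact h3 i j y hy⟩

lemma hr_TT : IsHighlyRegular ((⊤ : SimpleGraph (Fin 2)).boxProd (⊤ : SimpleGraph (Fin 2))) := by
  apply hr_concrete _ ![![0,1,0],![2,0,2],![0,1,0]]
  decide

lemma hr_BB : IsHighlyRegular ((⊥ : SimpleGraph (Fin 2)).boxProd (⊥ : SimpleGraph (Fin 2))) := by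
  apply hr_concrete _ 0
  decide

lemma hr_TB : IsHighlyRegular ((⊤ : SimpleGraph (Fin 2)).boxProd (⊥ : SimpleGraph (Fin 2))) := by
  apply hr_concrete _ ![![0,1,0],![1,0,0],![0,0,1]]
  decide

lemma hr_BT : IsHighlyRegular ((⊥ : SimpleGraph (Fin 2)).boxProd (⊤ : SimpleGraph (Fin 2))) := by
  apply hr_concrete _ ![![0,1,0],![1,0,0],![0,0,1]]
  decide

lemma hr_of_iso {V V' : Type*} [Fintype V] [Fintype V'] {G : SimpleGraph V}
    {G' : SimpleGraph V'} (e : V ≃ V') (he : ∀ x y, G.Adj x y ↔ G'.Adj (e x) (e y))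
    (h : IsHighlyRegular G) : IsHighlyRegular G' := by
  obtain ⟨m, C, hm, hcard, hpart⟩ := h
  refine ⟨m, C, hm, by rwa [← Fintype.card_congr e], fun u' => ?_⟩
  obtain ⟨P, h1, h2, h3⟩ := hpart (e.symm u')
  refine ⟨P ∘ e.symm, fun v => ?_, fun t => ?_, fun i j y hy => ?_⟩
  · rw [Function.comp_apply, h1, Equiv.symm_apply_eq, Equiv.apply_symm_apply]
  · obtain ⟨v, hv⟩ := h2 t
    exact ⟨e v, by simp [hv]⟩
  · have hset : {z | (P ∘ e.symm) z = i ∧ G'.Adj y z}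
        = e '' {z | P z = i ∧ G.Adj (e.symm y) z} := by
      ext z
      simp only [Function.comp_apply, Set.mem_setOf_eq, Set.mem_image]
      constructor
      · rintro ⟨h1', h2'⟩
        exact ⟨e.symm z, ⟨h1', by rw [he]; simpa⟩, by simp⟩
      · rintro ⟨w, ⟨hw1, hw2⟩, rfl⟩
        refine ⟨by simpa, ?_⟩
        rw [he] at hw2; simpa using hw2
    rw [hset, Set.ncard_image_of_injective _ e.injective]
    exact h3 i j (e.symm y) hy

lemma hr_of_iso_rev {V V' : Type*} [Fintype V] [Fintype V'] {G : SimpleGraph V}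
    {G' : SimpleGraph V'} (e : V ≃ V') (he : ∀ x y, G.Adj x y ↔ G'.Adj (e x) (e y))
    (h : IsHighlyRegular G') : IsHighlyRegular G :=
  hr_of_iso e.symm (fun x y => by rw [he]; simp) h

lemma card2_other {V : Type*} [Fintype V] (hV : Fintype.card V = 2) (a : V) :
    ∃ a' : V, a' ≠ a ∧ ∀ z : V, z = a ∨ z = a' := by
  have h2 : Nat.card V = 2 := by rwa [Nat.card_eq_fintype_card]
  obtain ⟨a', ha', huniq⟩ := (Nat.card_eq_two_iff' a).mp h2
  refine ⟨a', ha', fun z => ?_⟩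
  by_cases hz : z = a
  · exact Or.inl hz
  · exact Or.inr (huniq z hz)

lemma graph2_dichotomy {V : Type*} [Fintype V] (hV : Fintype.card V = 2)
    (G : SimpleGraph V) :
    (∀ x y : V, x ≠ y → G.Adj x y) ∨ (∀ x y : V, ¬ G.Adj x y) := by
  by_cases h : ∃ x y : V, G.Adj x y
  · obtain ⟨x, y, hxy⟩ := h
    left
    intro a b hab
    obtain ⟨x', hx', hallx⟩ := card2_other hV x
    have hy : y = x' := by
      rcases hallx y with rfl | rfl
      · exact absurd rfl hxy.ne'
      · rfl
    subst hy
    rcases hallx a with rfl | rfl <;> rcases hallx b with rfl | rfl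
    · exact absurd rfl hab
    · exact hxy
    · exact hxy.symm
    · exact absurd rfl hab
  · push_neg at h
    exact Or.inr h

lemma boxProd_iso_adj {V W V' W' : Type*} {G : SimpleGraph V} {H : SimpleGraph W}
    {G' : SimpleGraph V'} {H' : SimpleGraph W'} (e1 : V ≃ V') (e2 : W ≃ W')
    (h1 : ∀ x y, G.Adj x y ↔ G'.Adj (e1 x) (e1 y))
    (h2 : ∀ x y, H.Adj x y ↔ H'.Adj (e2 x) (e2 y)) :
    ∀ x y, (G.boxProd H).Adj x y ↔
      (G'.boxProd H').Adj ((e1.prodCongr e2) x) ((e1.prodCongr e2) y) := by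
  intro x y
  simp only [SimpleGraph.boxProd_adj, Equiv.prodCongr_apply, Prod.map_fst, Prod.map_snd,
    ← h1, ← h2, EmbeddingLike.apply_eq_iff_eq]

lemma hr_special {V W : Type*} [Fintype V] [Fintype W] (G : SimpleGraph V)
    (H : SimpleGraph W) (hV : Fintype.card V = 2) (hW : Fintype.card W = 2) :
    IsHighlyRegular (G.boxProd H) := by
  have eV : V ≃ Fin 2 := Fintype.equivFinOfCardEq hV
  have eW : W ≃ Fin 2 := Fintype.equivFinOfCardEq hW
  have hadjT : ∀ (hG1 : ∀ x y : V, x ≠ y → G.Adj x y) (x y : V),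
      G.Adj x y ↔ (⊤ : SimpleGraph (Fin 2)).Adj (eV x) (eV y) := by
    intro hG1 x y
    simp only [SimpleGraph.top_adj, ne_eq, EmbeddingLike.apply_eq_iff_eq]
    exact ⟨fun h => h.ne, fun h => hG1 x y h⟩
  have hadjT' : ∀ (hH1 : ∀ x y : W, x ≠ y → H.Adj x y) (x y : W),
      H.Adj x y ↔ (⊤ : SimpleGraph (Fin 2)).Adj (eW x) (eW y) := by
    intro hH1 x y
    simp only [SimpleGraph.top_adj, ne_eq, EmbeddingLike.apply_eq_iff_eq]
    exact ⟨fun h => h.ne, fun h => hH1 x y h⟩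
  have hadjB : ∀ (hG0 : ∀ x y : V, ¬ G.Adj x y) (x y : V),
      G.Adj x y ↔ (⊥ : SimpleGraph (Fin 2)).Adj (eV x) (eV y) := by
    intro hG0 x y
    simp [hG0 x y]
  have hadjB' : ∀ (hH0 : ∀ x y : W, ¬ H.Adj x y) (x y : W),
      H.Adj x y ↔ (⊥ : SimpleGraph (Fin 2)).Adj (eW x) (eW y) := by
    intro hH0 x y
    simp [hH0 x y]
  rcases graph2_dichotomy hV G with hG1 | hG0 <;> rcases graph2_dichotomy hW H with hH1 | hH0
  · exact hr_of_iso_rev (eV.prodCongr eW) (boxProd_iso_adj eV eW (hadjT hG1) (hadjT' hH1)) hr_TT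
  · exact hr_of_iso_rev (eV.prodCongr eW) (boxProd_iso_adj eV eW (hadjT hG1) (hadjB' hH0)) hr_TB
  · exact hr_of_iso_rev (eV.prodCongr eW) (boxProd_iso_adj eV eW (hadjB hG0) (hadjT' hH1)) hr_BT
  · exact hr_of_iso_rev (eV.prodCongr eW) (boxProd_iso_adj eV eW (hadjB hG0) (hadjB' hH0)) hr_BB

/-- The collapsed adjacency matrix of a box product. -/
def boxCAM {m m' : ℕ} (C : Fin m → Fin m → ℕ) (D : Fin m' → Fin m' → ℕ) :
    Fin (m * m') → Fin (m * m') → ℕ := fun k l =>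
  (if (finProdFinEquiv.symm k).2 = (finProdFinEquiv.symm l).2 then
      C (finProdFinEquiv.symm k).1 (finProdFinEquiv.symm l).1 else 0) +
  (if (finProdFinEquiv.symm k).1 = (finProdFinEquiv.symm l).1 then
      D (finProdFinEquiv.symm k).2 (finProdFinEquiv.symm l).2 else 0)

lemma box_witness {V W : Type*} [Fintype V] [Fintype W] (G : SimpleGraph V)
    (H : SimpleGraph W) {m m' : ℕ} (hm' : 0 < m')
    (C : Fin m → Fin m → ℕ) (D : Fin m' → Fin m' → ℕ)
    (hC : ∀ u : V, ∃ P : V → Fin m, IsWitnessingPartition G C u P)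
    (hD : ∀ u : W, ∃ P : W → Fin m', IsWitnessingPartition H D u P) :
    ∀ u : V × W, ∃ P : V × W → Fin (m * m'),
      IsWitnessingPartition (G.boxProd H) (boxCAM C D) u P := by
  intro u
  obtain ⟨Pg, g1, g2, g3⟩ := hC u.1
  obtain ⟨Ph, h1, h2, h3⟩ := hD u.2
  refine ⟨fun z => finProdFinEquiv (Pg z.1, Ph z.2), ?_, ?_, ?_⟩
  · intro v
    have hval : ((finProdFinEquiv (Pg v.1, Ph v.2) : Fin (m * m')) : ℕ)
        = (Ph v.2 : ℕ) + m' * (Pg v.1 : ℕ) := rfl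
    rw [hval]
    constructor
    · intro h
      have hj : (Ph v.2 : ℕ) = 0 := by omega
      have hmul : m' * (Pg v.1 : ℕ) = 0 := by omega
      have hi : (Pg v.1 : ℕ) = 0 := by
        rcases Nat.mul_eq_zero.mp hmul with h' | h'
        · omega
        · exact h'
      exact Prod.ext ((g1 v.1).mp hi) ((h1 v.2).mp hj)
    · rintro rfl
      rw [(g1 _).mpr rfl, (h1 _).mpr rfl]
      simp
  · intro t
    obtain ⟨⟨i, j⟩, rfl⟩ := finProdFinEquiv.surjective t
    obtain ⟨v1, hv1⟩ := g2 i
    obtain ⟨v2, hv2⟩ := h2 j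
    exact ⟨(v1, v2), by simp [hv1, hv2]⟩
  · intro k l y hy
    obtain ⟨⟨i, j⟩, rfl⟩ := finProdFinEquiv.surjective k
    obtain ⟨⟨a, b⟩, rfl⟩ := finProdFinEquiv.surjective l
    have hab := Prod.ext_iff.mp (finProdFinEquiv.injective hy)
    have ha : Pg y.1 = a := hab.1
    have hb : Ph y.2 = b := hab.2
    have hsplit : {z : V × W | finProdFinEquiv (Pg z.1, Ph z.2) = finProdFinEquiv (i, j)
          ∧ (G.boxProd H).Adj y z}
        = {z : V × W | Pg z.1 = i ∧ Ph z.2 = j ∧ G.Adj y.1 z.1 ∧ y.2 = z.2}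
        ∪ {z : V × W | Pg z.1 = i ∧ Ph z.2 = j ∧ H.Adj y.2 z.2 ∧ y.1 = z.1} := by
      ext z
      simp only [Set.mem_setOf_eq, Set.mem_union, EmbeddingLike.apply_eq_iff_eq,
        Prod.mk.injEq, SimpleGraph.boxProd_adj]
      tauto
    have hdisj : Disjoint {z : V × W | Pg z.1 = i ∧ Ph z.2 = j ∧ G.Adj y.1 z.1 ∧ y.2 = z.2}
        {z : V × W | Pg z.1 = i ∧ Ph z.2 = j ∧ H.Adj y.2 z.2 ∧ y.1 = z.1} := by
      rw [Set.disjoint_left]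
      rintro z ⟨-, -, hadj, -⟩ ⟨-, -, -, heq⟩
      exact G.irrefl (heq ▸ hadj)
    have hS1 : {z : V × W | Pg z.1 = i ∧ Ph z.2 = j ∧ G.Adj y.1 z.1 ∧ y.2 = z.2}.ncard
        = if j = b then C i a else 0 := by
      by_cases hjb : j = b
      · rw [if_pos hjb]
        have himg : {z : V × W | Pg z.1 = i ∧ Ph z.2 = j ∧ G.Adj y.1 z.1 ∧ y.2 = z.2}
            = (fun x => (x, y.2)) '' {x : V | Pg x = i ∧ G.Adj y.1 x} := by
          ext z
          simp only [Set.mem_setOf_eq, Set.mem_image, Prod.mk.injEq]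
          constructor
          · rintro ⟨hz1, hz2, hadj, hz4⟩
            exact ⟨z.1, ⟨hz1, hadj⟩, Prod.ext rfl hz4⟩
          · rintro ⟨x, ⟨hx1, hx2⟩, rfl⟩
            refine ⟨hx1, ?_, hx2, rfl⟩
            show Ph y.2 = j
            rw [hjb]
            exact hb
        rw [himg, Set.ncard_image_of_injective _
          (fun x x' h => (Prod.ext_iff.mp h).1)]
        exact g3 i a y.1 ha
      · rw [if_neg hjb, Set.ncard_eq_zero (Set.toFinite _)]
        ext z
        simp only [Set.mem_setOf_eq, Set.mem_empty_iff_false, iff_false, not_and]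
        rintro - hz - heq
        apply hjb
        rw [← hz, ← heq]
        exact hb
    have hS2 : {z : V × W | Pg z.1 = i ∧ Ph z.2 = j ∧ H.Adj y.2 z.2 ∧ y.1 = z.1}.ncard
        = if i = a then D j b else 0 := by
      by_cases hia : i = a
      · rw [if_pos hia]
        have himg : {z : V × W | Pg z.1 = i ∧ Ph z.2 = j ∧ H.Adj y.2 z.2 ∧ y.1 = z.1}
            = (fun x => (y.1, x)) '' {x : W | Ph x = j ∧ H.Adj y.2 x} := by
          ext z
          simp only [Set.mem_setOf_eq, Set.mem_image, Prod.mk.injEq]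
          constructor
          · rintro ⟨hz1, hz2, hadj, hz4⟩
            exact ⟨z.2, ⟨hz2, hadj⟩, Prod.ext hz4 rfl⟩
          · rintro ⟨x, ⟨hx1, hx2⟩, rfl⟩
            refine ⟨?_, hx1, hx2, rfl⟩
            show Pg y.1 = i
            rw [hia]
            exact ha
        rw [himg, Set.ncard_image_of_injective _
          (fun x x' h => (Prod.ext_iff.mp h).2)]
        exact h3 j b y.2 hb
      · rw [if_neg hia, Set.ncard_eq_zero (Set.toFinite _)]
        ext z
        simp only [Set.mem_setOf_eq, Set.mem_empty_iff_false, iff_false, not_and]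
        rintro hz - - heq
        apply hia
        rw [← hz, ← heq]
        exact ha
    calc {z : V × W | (fun z => finProdFinEquiv (Pg z.1, Ph z.2)) z = finProdFinEquiv (i, j)
          ∧ (G.boxProd H).Adj y z}.ncard
        = ({z : V × W | Pg z.1 = i ∧ Ph z.2 = j ∧ G.Adj y.1 z.1 ∧ y.2 = z.2}
          ∪ {z : V × W | Pg z.1 = i ∧ Ph z.2 = j ∧ H.Adj y.2 z.2 ∧ y.1 = z.1}).ncard := by
          rw [← hsplit]
      _ = (if j = b then C i a else 0) + (if i = a then D j b else 0) := by
          rw [Set.ncard_union_eq hdisj (Set.toFinite _) (Set.toFinite _), hS1, hS2]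
      _ = boxCAM C D (finProdFinEquiv (i, j)) (finProdFinEquiv (a, b)) := by
          simp [boxCAM]

/-- The Cartesian (box) product of two highly-regular graphs is
highly-regular. -/
theorem stmt9 {V W : Type*} [Fintype V] [Fintype W]
    (G : SimpleGraph V) (H : SimpleGraph W)
    (hG : IsHighlyRegular G) (hH : IsHighlyRegular H) :
    IsHighlyRegular (G.boxProd H) := by
  obtain ⟨m, C, hmC, hcardC, hpartC⟩ := hG
  obtain ⟨m', D, hmD, hcardD, hpartD⟩ := hH
  have hmleV : m ≤ Fintype.card V := by rcases hcardC with h | ⟨h, -⟩ <;> omega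
  have hmleW : m' ≤ Fintype.card W := by rcases hcardD with h | ⟨h, -⟩ <;> omega
  by_cases hlt : m * m' < Fintype.card V * Fintype.card W
  · refine ⟨m * m', boxCAM C D, ?_, ?_, box_witness G H (by omega) C D hpartC hpartD⟩
    · have : m ≤ m * m' := Nat.le_mul_of_pos_right m (by omega)
      omega
    · left
      rwa [Fintype.card_prod]
  · have hVeq : m = Fintype.card V ∧ Fintype.card V = 2 := by
      rcases hcardC with h | h
      · exact absurd (Nat.mul_lt_mul_of_lt_of_le h hmleW (by omega)) hlt
      · exact h
    have hWeq : m' = Fintype.card W ∧ Fintype.card W = 2 := by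
      rcases hcardD with h | h
      · exact absurd (Nat.mul_lt_mul_of_le_of_lt hmleV h (by omega)) hlt
      · exact h
    exact hr_special G H hVeq.2 hWeq.2
end

section
/- Let Γ be a connected highly-regular graph with CAM C = [c_{i,j}]_{1≤i,j≤m}. Let u, v be any two vertices with witnessing partitions V_1(u) = {u}, …, V_m(u) and V_1(v) = {v}, …, V_m(v) respectively. Then |V_t(u)| = |V_t(v)| for every t ∈ {1, …, m}. -/
lemma cell_mul {V : Type*} [Fintype V] {m : ℕ} (G : SimpleGraph V)
    (C : Fin m → Fin m → ℕ) (u : V) (P : V → Fin m)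
    (hP : IsWitnessingPartition G C u P) (i j : Fin m) :
    {w : V | P w = j}.ncard * C i j = {w : V | P w = i}.ncard * C j i := by
  classical
  obtain ⟨-, -, hadj⟩ := hP
  have key : ∀ a b : Fin m,
      (Finset.univ.filter fun p : V × V => P p.1 = b ∧ P p.2 = a ∧ G.Adj p.1 p.2).card
        = {w : V | P w = b}.ncard * C a b := by
    intro a b
    set T := Finset.univ.filter fun p : V × V => P p.1 = b ∧ P p.2 = a ∧ G.Adj p.1 p.2 with hT
    have h1 : ∀ p ∈ T, p.1 ∈ Finset.univ.filter fun y => P y = b := by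
      intro p hp
      simp only [hT, Finset.mem_filter, Finset.mem_univ, true_and] at hp ⊢
      exact hp.1
    rw [Finset.card_eq_sum_card_fiberwise h1]
    have h2 : ∀ y ∈ Finset.univ.filter fun y => P y = b,
        (T.filter fun p => p.1 = y).card = C a b := by
      intro y hy
      simp only [Finset.mem_filter, Finset.mem_univ, true_and] at hy
      have hc := hadj a b y hy
      have hcard : {z : V | P z = a ∧ G.Adj y z}.ncard
          = (Finset.univ.filter fun z => P z = a ∧ G.Adj y z).card := by
        rw [← Set.ncard_coe_finset]; congr 1; ext z; simp
      rw [hcard] at hc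
      rw [← hc]
      refine Finset.card_bij' (fun p _ => p.2) (fun z _ => (y, z)) ?_ ?_ ?_ ?_
      · intro p hp
        simp only [hT, Finset.mem_filter, Finset.mem_univ, true_and] at hp ⊢
        obtain ⟨⟨hb1, hb2, hb3⟩, hb4⟩ := hp
        subst hb4; exact ⟨hb2, hb3⟩
      · intro z hz
        simp only [hT, Finset.mem_filter, Finset.mem_univ, true_and] at hz ⊢
        exact ⟨⟨hy, hz.1, hz.2⟩, trivial⟩
      · intro p hp
        simp only [hT, Finset.mem_filter] at hp
        obtain ⟨-, hb4⟩ := hp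
        exact Prod.ext hb4.symm rfl
      · intro z hz; rfl
    rw [Finset.sum_congr rfl h2, Finset.sum_const, smul_eq_mul]
    congr 1
    rw [← Set.ncard_coe_finset]; congr 1; ext z; simp
  have swap : (Finset.univ.filter fun p : V × V => P p.1 = j ∧ P p.2 = i ∧ G.Adj p.1 p.2).card
      = (Finset.univ.filter fun p : V × V => P p.1 = i ∧ P p.2 = j ∧ G.Adj p.1 p.2).card := by
    refine Finset.card_bij' (fun p _ => p.swap) (fun p _ => p.swap) ?_ ?_ ?_ ?_
    · intro p hp
      simp only [Finset.mem_filter, Finset.mem_univ, true_and] at hp ⊢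
      exact ⟨hp.2.1, hp.1, hp.2.2.symm⟩
    · intro p hp
      simp only [Finset.mem_filter, Finset.mem_univ, true_and] at hp ⊢
      exact ⟨hp.2.1, hp.1, hp.2.2.symm⟩
    · intro p _; simp
    · intro p _; simp
  rw [← key i j, ← key j i, swap]

/-- For a connected highly-regular graph with CAM `C`, corresponding
cells of witnessing partitions at any two vertices have the same cardinality. -/
theorem stmt11 {V : Type*} [Fintype V] (G : SimpleGraph V) (hconn : G.Connected)
    {m : ℕ} (C : Fin m → Fin m → ℕ) (hC : IsCAM G C)
    (u v : V) (P Q : V → Fin m)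
    (hP : IsWitnessingPartition G C u P) (hQ : IsWitnessingPartition G C v Q) :
    ∀ t : Fin m, {w : V | P w = t}.ncard = {w : V | Q w = t}.ncard := by
  classical
  haveI : NeZero m := ⟨by have := hC.1; omega⟩
  have hval : ∀ (R : V → Fin m) (w : V), (R w = 0) ↔ ((R w : ℕ) = 0) := by
    intro R w
    constructor
    · intro h; rw [h]; simp
    · intro h; exact Fin.ext (by simpa using h)
  have hPu : P u = 0 := (hval P u).mpr ((hP.1 u).mpr rfl)
  have cell0 : ∀ (w₀ : V) (R : V → Fin m), IsWitnessingPartition G C w₀ R →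
      {w : V | R w = 0} = {w₀} := by
    intro w₀ R hR
    ext w
    simp only [Set.mem_setOf_eq, Set.mem_singleton_iff]
    rw [hval R w, hR.1 w]
  -- adjacency forces nonzero CAM entries
  have step : ∀ (R : V → Fin m), IsWitnessingPartition G C v R → True := fun _ _ => trivial
  have adj_ne : ∀ a b : V, G.Adj a b → C (P a) (P b) ≠ 0 := by
    intro a b hab hzero
    have hc := hP.2.2 (P a) (P b) b rfl
    rw [hzero] at hc
    have hemp := (Set.ncard_eq_zero (Set.toFinite _)).mp hc
    have : a ∈ {z : V | P z = P a ∧ G.Adj b z} := ⟨rfl, hab.symm⟩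
    rw [hemp] at this
    exact this
  set r : Fin m → Fin m → Prop := fun i j => C i j ≠ 0 ∧ C j i ≠ 0 with hr
  have walkreach : ∀ (a b : V), G.Walk a b → Relation.ReflTransGen r (P a) (P b) := by
    intro a b p
    induction p with
    | nil => exact Relation.ReflTransGen.refl
    | cons h q ih =>
      exact Relation.ReflTransGen.head ⟨adj_ne _ _ h, adj_ne _ _ h.symm⟩ ih
  have reach : ∀ w : V, Relation.ReflTransGen r 0 (P w) := by
    intro w
    obtain ⟨p⟩ := hconn u w
    rw [← hPu]
    exact walkreach u w p
  have main : ∀ t : Fin m, Relation.ReflTransGen r 0 t →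
      {w : V | P w = t}.ncard = {w : V | Q w = t}.ncard := by
    intro t h
    induction h with
    | refl =>
      rw [cell0 u P hP, cell0 v Q hQ, Set.ncard_singleton, Set.ncard_singleton]
    | tail hseg hstep ih =>
      rename_i b c
      obtain ⟨h1, h2⟩ := hstep
      have e1 := cell_mul G C u P hP b c
      have e2 := cell_mul G C v Q hQ b c
      rw [ih] at e1
      rw [← e2] at e1
      exact Nat.eq_of_mul_eq_mul_right (Nat.pos_of_ne_zero h1) e1
  intro t
  obtain ⟨w, hw⟩ := hP.2.1 t
  exact main t (hw ▸ reach w)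
end

section
/- Let Γ be a connected highly-regular graph. Then for every i ∈ {0, 1, …, diam(Γ)} and all vertices u, v, the induced subgraph of Γ on D_i(u) and the induced subgraph of Γ on D_i(v) have the same degree sequence, i.e., the multiset of vertex degrees of the induced subgraph on D_i(u) equals the multiset of vertex degrees of the induced subgraph on D_i(v). -/
/-!
Fix a CAM `C` and witnessing partitions `P` at `u` and `Q` at `v`. Vertices `y`, `z` with
`P y = Q z` have the same number of neighbours in every union of cells, so the relation
`P y = Q z` is a bisimulation of the graph with itself, relating `u` only to `v`; hence
`d(u, y) = d(v, z)` and `D_i(u)`, `D_i(v)` are unions of the same cells. Double counting the edges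
between two cells gives `|P⁻¹ j| * C i j = |P⁻¹ i| * C j i`, and propagating from the singleton
cell `{u}` along walks shows that corresponding cells of `P` and `Q` have the same size. A
bijection `σ` of the vertices with `Q ∘ σ = P` then carries the vertices of degree `d` in
`Γ[D_i(u)]` onto those of degree `d` in `Γ[D_i(v)]`.
-/

namespace SimpleGraph.Walk

variable {V W : Type*} {G : SimpleGraph V} {H : SimpleGraph W}

theorem exists_walk_of_forth {R : V → W → Prop}
    (hR : ∀ y z w, R y z → G.Adj y w → ∃ w', H.Adj z w' ∧ R w w') :
    ∀ {y y' : V} (p : G.Walk y y') {z : W}, R y z →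
      ∃ z', R y' z' ∧ ∃ q : H.Walk z z', q.length = p.length
  | _, _, nil, z, h => ⟨z, h, nil, rfl⟩
  | _, _, cons hyw p, z, h => by
    obtain ⟨w', hzw', hw⟩ := hR _ _ _ h hyw
    obtain ⟨z', hz', q, hq⟩ := exists_walk_of_forth hR p hw
    exact ⟨z', hz', cons hzw' q, by simp [hq]⟩

end SimpleGraph.Walk

namespace IsWitnessingPartition

variable {V : Type*} [Fintype V] {G : SimpleGraph V} {m : ℕ} {C : Fin m → Fin m → ℕ}
  {u v : V} {P Q : V → Fin m}

theorem apply_eq_apply (hP : IsWitnessingPartition G C u P)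
    (hQ : IsWitnessingPartition G C v Q) : P u = Q v :=
  Fin.ext <| ((hP.1 u).2 rfl).trans ((hQ.1 v).2 rfl).symm

theorem preimage_singleton_apply_self (hP : IsWitnessingPartition G C u P) :
    P ⁻¹' {P u} = {u} := by
  ext x
  simp only [Set.mem_preimage, Set.mem_singleton_iff]
  exact ⟨fun h => (hP.1 x).1 (h ▸ (hP.1 u).2 rfl), fun h => h ▸ rfl⟩

theorem ncard_adj_preimage_eq_sum (hP : IsWitnessingPartition G C u P) (K : Finset (Fin m))
    (y : V) :
    {z | P z ∈ K ∧ G.Adj y z}.ncard = ∑ k ∈ K, C k (P y) := by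
  classical
  rw [Set.ncard_eq_toFinset_card', Finset.card_eq_sum_card_fiberwise (f := P) (t := K)
    fun _ hz => (Set.mem_toFinset.1 hz).1]
  refine Finset.sum_congr rfl fun k hk => ?_
  rw [← hP.2.2 k (P y) y rfl, Set.ncard_eq_toFinset_card']
  congr 1
  ext z
  simp only [Set.toFinset_ofPred, Finset.mem_filter, Finset.mem_univ, true_and]
  constructor
  · rintro ⟨⟨-, hyz⟩, rfl⟩
    exact ⟨rfl, hyz⟩
  · rintro ⟨rfl, hyz⟩
    exact ⟨⟨hk, hyz⟩, rfl⟩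

theorem ncard_adj_preimage_eq (hP : IsWitnessingPartition G C u P)
    (hQ : IsWitnessingPartition G C v Q) (K : Set (Fin m)) {y z : V} (h : P y = Q z) :
    {w | P w ∈ K ∧ G.Adj y w}.ncard = {w | Q w ∈ K ∧ G.Adj z w}.ncard := by
  classical
  have hPK := hP.ncard_adj_preimage_eq_sum K.toFinset y
  have hQK := hQ.ncard_adj_preimage_eq_sum K.toFinset z
  simp only [Set.mem_toFinset] at hPK hQK
  rw [hPK, hQK, h]

theorem exists_adj_of_apply_eq (hP : IsWitnessingPartition G C u P)
    (hQ : IsWitnessingPartition G C v Q) {y z w : V} (h : P y = Q z) (hyw : G.Adj y w) :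
    ∃ w', G.Adj z w' ∧ P w = Q w' := by
  have hne : {x | P x ∈ ({P w} : Set (Fin m)) ∧ G.Adj y x}.Nonempty := ⟨w, rfl, hyw⟩
  rw [← Set.ncard_pos, hP.ncard_adj_preimage_eq hQ _ h] at hne
  obtain ⟨w', hw', hzw'⟩ := Set.nonempty_of_ncard_ne_zero hne.ne'
  exact ⟨w', hzw', hw'.symm⟩

theorem dist_le_of_apply_eq (hconn : G.Connected) (hP : IsWitnessingPartition G C u P)
    (hQ : IsWitnessingPartition G C v Q) {y z : V} (h : P y = Q z) :
    G.dist v z ≤ G.dist u y := by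
  obtain ⟨p, hp⟩ := hconn.exists_walk_length_eq_dist y u
  obtain ⟨v', huv', q, hq⟩ := SimpleGraph.Walk.exists_walk_of_forth
    (fun _ _ _ h hyw => hP.exists_adj_of_apply_eq hQ h hyw) p h
  have hv' : v' = v := (hQ.1 v').1 (huv' ▸ (hP.1 u).2 rfl)
  subst hv'
  rw [SimpleGraph.dist_comm, SimpleGraph.dist_comm (u := u), ← hp, ← hq]
  exact SimpleGraph.dist_le q

theorem dist_eq_of_apply_eq (hconn : G.Connected) (hP : IsWitnessingPartition G C u P)
    (hQ : IsWitnessingPartition G C v Q) {y z : V} (h : P y = Q z) :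
    G.dist u y = G.dist v z :=
  (hQ.dist_le_of_apply_eq hconn hP h.symm).antisymm (hP.dist_le_of_apply_eq hconn hQ h)

theorem dist_eq_iff_mem_image (hconn : G.Connected) (hP : IsWitnessingPartition G C u P)
    (hQ : IsWitnessingPartition G C v Q) (i : ℕ) (w : V) :
    G.dist v w = i ↔ Q w ∈ P '' {x | G.dist u x = i} := by
  constructor
  · rintro rfl
    obtain ⟨x, hx⟩ := hP.2.1 (Q w)
    exact ⟨x, hP.dist_eq_of_apply_eq hconn hQ hx, hx⟩
  · rintro ⟨x, rfl, hx⟩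
    exact (hP.dist_eq_of_apply_eq hconn hQ hx).symm

theorem mul_ncard_preimage_singleton (hP : IsWitnessingPartition G C u P) (i j : Fin m) :
    (P ⁻¹' {j}).ncard * C i j = (P ⁻¹' {i}).ncard * C j i := by
  classical
  simp only [Set.ncard_eq_toFinset_card']
  refine Finset.card_mul_eq_card_mul G.Adj (fun y hy => ?_) (fun x hx => ?_)
  · rw [← hP.2.2 i j y (by simpa using hy), Set.ncard_eq_toFinset_card']
    congr 1
    ext
    simp [Finset.bipartiteAbove]
  · rw [← hP.2.2 j i x (by simpa using hx), Set.ncard_eq_toFinset_card']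
    congr 1
    ext
    simp [Finset.bipartiteBelow, G.adj_comm]

theorem ncard_preimage_singleton_eq_of_adj (hP : IsWitnessingPartition G C u P)
    (hQ : IsWitnessingPartition G C v Q) {y w : V} (hyw : G.Adj y w)
    (hw : (P ⁻¹' {P w}).ncard = (Q ⁻¹' {P w}).ncard) :
    (P ⁻¹' {P y}).ncard = (Q ⁻¹' {P y}).ncard := by
  have hC : 0 < C (P w) (P y) := by
    rw [← hP.2.2 _ _ y rfl, Set.ncard_pos]
    exact ⟨w, rfl, hyw⟩
  refine Nat.eq_of_mul_eq_mul_right hC ?_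
  rw [hP.mul_ncard_preimage_singleton, hQ.mul_ncard_preimage_singleton, hw]

theorem ncard_preimage_singleton_eq (hconn : G.Connected) (hP : IsWitnessingPartition G C u P)
    (hQ : IsWitnessingPartition G C v Q) (j : Fin m) :
    (P ⁻¹' {j}).ncard = (Q ⁻¹' {j}).ncard := by
  obtain ⟨y, rfl⟩ := hP.2.1 j
  obtain ⟨p⟩ := hconn.preconnected y u
  induction p with
  | nil =>
    rw [hP.preimage_singleton_apply_self, hP.apply_eq_apply hQ, hQ.preimage_singleton_apply_self,
      Set.ncard_singleton, Set.ncard_singleton]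
  | cons hyw _ ih => exact hP.ncard_preimage_singleton_eq_of_adj hQ hyw (ih hP)

theorem exists_equiv_apply_eq (hconn : G.Connected) (hP : IsWitnessingPartition G C u P)
    (hQ : IsWitnessingPartition G C v Q) : ∃ σ : V ≃ V, ∀ y, Q (σ y) = P y := by
  classical
  refine ⟨Equiv.ofFiberEquiv fun j => Fintype.equivOfCardEq ?_, Equiv.ofFiberEquiv_map _⟩
  simpa [Set.ncard_eq_toFinset_card', Fintype.card_subtype] using
    hP.ncard_preimage_singleton_eq hconn hQ j

end IsWitnessingPartition

/-- For a connected highly-regular graph, the induced subgraphs on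
`D_i(u)` and `D_i(v)` have the same degree sequence: for each `d`, the number of
vertices of `D_i(u)` having exactly `d` neighbours inside `D_i(u)` equals the
corresponding number for `v`. -/
theorem stmt12 {V : Type*} [Fintype V] (G : SimpleGraph V)
    (hconn : G.Connected) (hhr : IsHighlyRegular G) :
    ∀ i : ℕ, i ≤ G.diam → ∀ u v : V, ∀ d : ℕ,
      {w : V | G.dist u w = i ∧ {z : V | G.dist u z = i ∧ G.Adj w z}.ncard = d}.ncard =
      {w : V | G.dist v w = i ∧ {z : V | G.dist v z = i ∧ G.Adj w z}.ncard = d}.ncard := by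
  intro i _ u v d
  obtain ⟨m, C, -, -, hW⟩ := hhr
  obtain ⟨P, hP⟩ := hW u
  obtain ⟨Q, hQ⟩ := hW v
  obtain ⟨σ, hσ⟩ := hP.exists_equiv_apply_eq hconn hQ
  set K := P '' {x | G.dist u x = i}
  have hu (w : V) : G.dist u w = i ↔ P w ∈ K := hP.dist_eq_iff_mem_image hconn hP i w
  have hv (w : V) : G.dist v w = i ↔ Q w ∈ K := hP.dist_eq_iff_mem_image hconn hQ i w
  simp only [hu, hv]
  have hσK : {w | P w ∈ K ∧ {z | P z ∈ K ∧ G.Adj w z}.ncard = d} =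
      σ ⁻¹' {w | Q w ∈ K ∧ {z | Q z ∈ K ∧ G.Adj w z}.ncard = d} := by
    ext w
    simp only [Set.mem_ofPred_eq, Set.mem_preimage, hσ,
      hP.ncard_adj_preimage_eq hQ K (hσ w).symm]
  rw [hσK, Set.ncard_preimage_of_injective_subset_range σ.injective (by simp)]
end

section
/- Let Γ be a connected highly-regular graph, let u be any vertex, and for each i ∈ {1, …, diam(Γ)} let k_i be the number of distinct degrees occurring in the induced subgraph of Γ on D_i(u). Then I(Γ) ≥ 1 + Σ_{i=1}^{diam(Γ)} k_i. -/
/-!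
Fix a CAM of minimal size `I(Γ)` and its witnessing partition `P` at `u`. Such a partition is
equitable with `{u}` as a cell, so by induction on the distance every cell lies inside a single
sphere `D_i(u)`; and the number of neighbours a vertex of `D_i(u)` has inside `D_i(u)` is the sum
of the entries of `C` over the cells in `D_i(u)`, so it depends only on the cell of the vertex.
Hence `k_i` is at most the number of cells inside `D_i(u)`, and these cells, for `1 ≤ i ≤ diam Γ`,
are distinct from the cell `{u}`.
-/

open Finset Function

theorem Set.ncard_image_le_ncard_image_of_factorsThrough {α β γ : Type*} {f : α → β}
    {P : α → γ} (hf : f.FactorsThrough P) (s : Set α) (hs : (P '' s).Finite) :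
    (f '' s).ncard ≤ (P '' s).ncard := by
  rcases s.eq_empty_or_nonempty with rfl | ⟨a, -⟩
  · simp
  have hfP : f '' s = extend P f (fun _ => f a) '' (P '' s) := by
    rw [Set.image_image]
    exact Set.image_congr fun x _ => (hf.extend_apply _ x).symm
  rw [hfP]
  exact Set.ncard_image_le hs

namespace SimpleGraph

variable {V ι : Type*} {G : SimpleGraph V}

theorem Connected.exists_adj_dist_lt (hconn : G.Connected) {u v : V} (hvu : v ≠ u) :
    ∃ x, G.Adj v x ∧ G.dist u x < G.dist u v := by
  obtain ⟨p, hp⟩ := hconn.exists_walk_length_eq_dist v u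
  have hnil : ¬ p.Nil := Walk.not_nil_of_ne hvu
  refine ⟨p.snd, p.adj_snd hnil, ?_⟩
  have htail := Walk.length_tail_add_one hnil
  have hle := dist_le p.tail
  rw [dist_comm (u := u), dist_comm (u := u), ← hp]
  omega

variable (G) in
def IsEquitablePartition (P : V → ι) : Prop :=
  ∀ (t : ι) (v w : V), P v = P w →
    {z | P z = t ∧ G.Adj v z}.ncard = {z | P z = t ∧ G.Adj w z}.ncard

namespace IsEquitablePartition

variable [Finite V] {P : V → ι}

theorem exists_adj_of_eq (hP : G.IsEquitablePartition P) {v w x : V} (hvw : P v = P w)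
    (hx : G.Adj v x) : ∃ z, P z = P x ∧ G.Adj w z := by
  have hpos : 0 < {z | P z = P x ∧ G.Adj v z}.ncard :=
    (Set.ncard_pos (Set.toFinite _)).mpr ⟨x, rfl, hx⟩
  rw [hP (P x) v w hvw] at hpos
  exact Set.nonempty_of_ncard_ne_zero hpos.ne'

theorem dist_le_of_eq (hP : G.IsEquitablePartition P) (hconn : G.Connected) {u : V}
    (hu : ∀ v, P v = P u → v = u) {v w : V} (hvw : P v = P w) : G.dist u w ≤ G.dist u v := by
  induction hd : G.dist u v using Nat.strong_induction_on generalizing v w with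
  | _ n ih =>
    by_cases hvu : v = u
    · subst hvu
      rw [hu w hvw.symm, dist_self]
      exact Nat.zero_le _
    obtain ⟨x, hvx, hx⟩ := hconn.exists_adj_dist_lt hvu
    obtain ⟨z, hzx, hwz⟩ := hP.exists_adj_of_eq hvw hvx
    have hz : G.dist u z ≤ G.dist u x := ih _ (hd ▸ hx) hzx.symm rfl
    have hzw : G.dist z w = 1 := dist_eq_one_iff_adj.mpr hwz.symm
    have := hconn.dist_triangle (u := u) (v := z) (w := w)
    omega

theorem dist_eq_of_eq (hP : G.IsEquitablePartition P) (hconn : G.Connected) {u : V}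
    (hu : ∀ v, P v = P u → v = u) {v w : V} (hvw : P v = P w) : G.dist u v = G.dist u w :=
  le_antisymm (hP.dist_le_of_eq hconn hu hvw.symm) (hP.dist_le_of_eq hconn hu hvw)

theorem ncard_adj_preimage_eq (hP : G.IsEquitablePartition P) (T : Set ι) {v w : V}
    (hvw : P v = P w) :
    {z | P z ∈ T ∧ G.Adj v z}.ncard = {z | P z ∈ T ∧ G.Adj w z}.ncard := by
  classical
  have := Fintype.ofFinite V
  let cells : Finset ι := (univ.image P).filter (· ∈ T)
  have hsplit : ∀ y : V,
      {z | P z ∈ T ∧ G.Adj y z}.ncard = ∑ t ∈ cells, {z | P z = t ∧ G.Adj y z}.ncard := by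
    intro y
    have hfiber : ∀ t ∈ cells, {z | P z = t ∧ G.Adj y z}.ncard =
        #{z ∈ univ.filter (fun z => P z ∈ T ∧ G.Adj y z) | P z = t} := by
      intro t ht
      simp only [cells, mem_filter] at ht
      rw [← Set.ncard_coe_finset]
      congr 1
      ext z
      simp only [coe_filter, mem_filter, mem_univ, true_and, Set.mem_ofPred_eq]
      exact ⟨fun h => ⟨⟨h.1 ▸ ht.2, h.2⟩, h.1⟩, fun h => ⟨h.2, h.1.2⟩⟩
    have hmaps : ∀ z ∈ univ.filter (fun z => P z ∈ T ∧ G.Adj y z), P z ∈ cells := by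
      simp +contextual [cells]
    rw [sum_congr rfl hfiber, ← card_eq_sum_card_fiberwise hmaps, ← Set.ncard_coe_finset]
    congr 1
    ext z
    simp
  rw [hsplit v, hsplit w]
  exact sum_congr rfl fun t _ => hP t v w hvw

theorem ncard_sphereDegrees_le [Fintype ι] (hP : G.IsEquitablePartition P) {u : V}
    {g : ι → ℕ} (hg : ∀ v, g (P v) = G.dist u v) (i : ℕ) :
    {d | ∃ w, G.dist u w = i ∧ {z | G.dist u z = i ∧ G.Adj w z}.ncard = d}.ncard ≤
      #{t | g t = i} := by
  classical
  let degIn : V → ℕ := fun w => {z | G.dist u z = i ∧ G.Adj w z}.ncard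
  have hdeg : degIn.FactorsThrough P := fun v w hvw => by
    simpa only [degIn, Set.mem_preimage, Set.mem_singleton_iff, hg] using
      hP.ncard_adj_preimage_eq (g ⁻¹' {i}) hvw
  have hsphere : P '' {w | G.dist u w = i} ⊆ ↑(univ.filter fun t => g t = i) := by
    rintro _ ⟨w, hw, rfl⟩
    simpa [hg] using hw
  calc _ = (degIn '' {w | G.dist u w = i}).ncard := rfl
    _ ≤ (P '' {w | G.dist u w = i}).ncard :=
      Set.ncard_image_le_ncard_image_of_factorsThrough hdeg _ (Set.toFinite _)
    _ ≤ #{t | g t = i} := (Set.ncard_le_ncard hsphere).trans (Set.ncard_coe_finset _).le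

end IsEquitablePartition

end SimpleGraph

theorem IsWitnessingPartition.isEquitablePartition {V : Type*} [Fintype V] {G : SimpleGraph V}
    {m : ℕ} {C : Fin m → Fin m → ℕ} {u : V} {P : V → Fin m}
    (hP : IsWitnessingPartition G C u P) : G.IsEquitablePartition P :=
  fun t v w hvw => (hP.2.2 t (P v) v rfl).trans (hP.2.2 t (P v) w hvw.symm).symm

/-- For a connected highly-regular graph, if `k i` is the number of
distinct degrees occurring in the induced subgraph on `D_i(u)`, then
`I(Γ) ≥ 1 + Σ_{i=1}^{diam Γ} k i`. -/
theorem stmt13 {V : Type*} [Fintype V] (G : SimpleGraph V)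
    (hconn : G.Connected) (hhr : IsHighlyRegular G)
    (u : V) (k : ℕ → ℕ)
    (hk : ∀ i : ℕ, k i =
      {d : ℕ | ∃ w : V, G.dist u w = i ∧
        {z : V | G.dist u z = i ∧ G.Adj w z}.ncard = d}.ncard) :
    1 + ∑ i ∈ Finset.Icc 1 G.diam, k i ≤ hrIndex G := by
  classical
  obtain ⟨C, hC⟩ : hrIndex G ∈ {m : ℕ | ∃ C : Fin m → Fin m → ℕ, IsCAM G C} :=
    Nat.sInf_mem (by obtain ⟨m, C, h⟩ := hhr; exact ⟨m, C, h⟩)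
  obtain ⟨P, hP⟩ := hC.2.2 u
  have hEq := hP.isEquitablePartition
  have hu : ∀ v, P v = P u → v = u := fun v h => (hP.1 v).1 (h ▸ (hP.1 u).2 rfl)
  set g := extend P (G.dist u) 0
  have hg : ∀ v, g (P v) = G.dist u v := fun v =>
    FactorsThrough.extend_apply (fun _ _ h => hEq.dist_eq_of_eq hconn hu h) _ v
  have hcells : #{t | g t ∈ Icc 1 G.diam} < hrIndex G := by
    have hsub : ({t | g t ∈ Icc 1 G.diam} : Finset _) ⊂ univ :=
      filter_ssubset.2 ⟨P u, mem_univ _, by simp [hg]⟩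
    simpa using card_lt_card hsub
  calc 1 + ∑ i ∈ Icc 1 G.diam, k i
      ≤ 1 + ∑ i ∈ Icc 1 G.diam, #{t | g t = i} := by
        gcongr with i
        exact (hk i).trans_le (hEq.ncard_sphereDegrees_le hg i)
    _ = 1 + #{t | g t ∈ Icc 1 G.diam} := by rw [sum_card_fiberwise_eq_card_filter]
    _ ≤ hrIndex G := by omega
end

section
/- Let n, m be integers with 2 ≤ n ≤ m, and let T_{n,m} = C_n □ C_m be the Cartesian product of the cycle graphs C_n and C_m (where C_2 denotes the complete graph on two vertices). Then T_{n,m} is a connected highly-regular graph, and T_{n,m} is a distance-regular graph if and only if (n,m) ∈ {(2,2), (2,4), (3,3), (4,4)}. -/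
/-!
Translations act transitively on the torus `C_n □ C_m`, and the stabiliser of `0` contains the
reflections `x ↦ -x` of either coordinate. With the circular norm `min(d, n - d)` of
`d ∈ ℤ/n` (the distance from `0` in `C_n`), the cells "norm `a` in the first coordinate, `b` in
the second" are exactly the orbits of the group these reflections generate, so they form
a collapsed adjacency matrix with `(⌊n/2⌋ + 1)(⌊m/2⌋ + 1) < nm` cells; only for
`C₂ □ C₂ = C₄` is this too many, and there the distance partition is used instead.

Distances add up in a box product, so the neighbour counts in the definition of distance
regularity are explicit. The four distance-regular tori (`C₄`, the cube `Q₃`, the rook graph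
`K₃ □ K₃` and `Q₄`) are checked against their intersection arrays. For `m ≥ 5` the pairs
`(0, (1, 1))` and `((0, -1), (0, 1))` are both at distance `2` but have `2` and `1` common
neighbours; `C₂ □ C₃` and `C₃ □ C₄` are ruled out by similar explicit pairs.
-/

open SimpleGraph

lemma SimpleGraph.Reachable.le_add_dist {V : Type*} {G : SimpleGraph V} {u v : V}
    (h : G.Reachable u v) (f : V → ℕ) (hf : ∀ a b, G.Adj a b → f b ≤ f a + 1) :
    f v ≤ f u + G.dist u v := by
  obtain ⟨p, hp⟩ := h.exists_walk_length_eq_dist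
  rw [← hp]
  clear hp h
  induction p with
  | nil => simp
  | cons hadj p ih => rw [Walk.length_cons]; have := hf _ _ hadj; omega

section BoxProd

variable {α β α' β' : Type*} {G : SimpleGraph α} {H : SimpleGraph β}
  {G' : SimpleGraph α'} {H' : SimpleGraph β'}

lemma SimpleGraph.dist_boxProd (hG : G.Connected) (hH : H.Connected) (x y : α × β) :
    (G □ H).dist x y = G.dist x.1 y.1 + H.dist x.2 y.2 := by
  rw [dist, edist_boxProd, ENat.toNat_add (edist_ne_top_iff_reachable.mpr (hG.preconnected _ _))
    (edist_ne_top_iff_reachable.mpr (hH.preconnected _ _))]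
  rfl

def SimpleGraph.Iso.boxProdCongr (φ : G ≃g G') (ψ : H ≃g H') : (G □ H) ≃g (G' □ H') where
  toEquiv := φ.toEquiv.prodCongr ψ.toEquiv
  map_rel_iff' {x y} := by
    simp only [Equiv.prodCongr_apply, Prod.map, boxProd_adj]
    exact or_congr (and_congr φ.map_adj_iff ψ.injective.eq_iff)
      (and_congr ψ.map_adj_iff φ.injective.eq_iff)

end BoxProd

section HighlyRegular

variable {V W α : Type*} {G : SimpleGraph V} {H : SimpleGraph W}

lemma ncard_setOf_comp_iso_adj (φ : G ≃g H) (P : W → α) (i : α) (y : V) :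
    {z | P (φ z) = i ∧ G.Adj y z}.ncard = {w | P w = i ∧ H.Adj (φ y) w}.ncard := by
  have hpre : {z | P (φ z) = i ∧ G.Adj y z} = φ ⁻¹' {w | P w = i ∧ H.Adj (φ y) w} := by
    ext z
    simp [φ.map_adj_iff]
  rw [hpre, Set.ncard_preimage_of_injective_subset_range φ.injective (by simp)]

variable [Fintype V] {m : ℕ} {C : Fin m → Fin m → ℕ}

lemma IsWitnessingPartition.comp_iso {u : V} {P : V → Fin m} (φ : G ≃g G)
    (h : IsWitnessingPartition G C (φ u) P) : IsWitnessingPartition G C u (P ∘ φ) := by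
  obtain ⟨hcell₀, hsurj, hcount⟩ := h
  refine ⟨fun v => by simp [hcell₀, φ.injective.eq_iff], fun t => ?_, fun i j y hy => ?_⟩
  · obtain ⟨v, hv⟩ := hsurj t
    exact ⟨φ.symm v, by simp [hv]⟩
  · rw [← hcount i j (φ y) hy]
    exact ncard_setOf_comp_iso_adj φ P i y

lemma isWitnessingPartition_of_invariant {u₀ : V} {P : V → Fin m}
    (hcell₀ : ∀ v, (P v : ℕ) = 0 ↔ v = u₀) (hsurj : Function.Surjective P)
    (horbit : ∀ y z, P y = P z → ∃ φ : G ≃g G, φ y = z ∧ ∀ w, P (φ w) = P w) :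
    IsWitnessingPartition G
      (fun i j => {z | P z = i ∧ G.Adj (Function.surjInv hsurj j) z}.ncard) u₀ P := by
  refine ⟨hcell₀, hsurj, fun i j y hy => ?_⟩
  obtain ⟨φ, hφy, hφP⟩ := horbit y (Function.surjInv hsurj j)
    (hy.trans (Function.surjInv_eq hsurj j).symm)
  simp only [← hφy, ← ncard_setOf_comp_iso_adj φ P i y, hφP]

theorem isHighlyRegular_of_invariant_labelling {κ : Type*} [Fintype κ] [DecidableEq κ]
    (u₀ : V) (ℓ : V → κ) (hsurj : Function.Surjective ℓ) (hℓ₀ : ∀ v, ℓ v = ℓ u₀ → v = u₀)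
    (horbit : ∀ y z, ℓ y = ℓ z → ∃ φ : G ≃g G, φ y = z ∧ ∀ w, ℓ (φ w) = ℓ w)
    (htrans : ∀ u, ∃ τ : G ≃g G, τ u = u₀) (hκ : 2 ≤ Fintype.card κ)
    (hκV : Fintype.card κ < Fintype.card V ∨
      (Fintype.card κ = Fintype.card V ∧ Fintype.card V = 2)) :
    IsHighlyRegular G := by
  let e := Fintype.equivFin κ
  let σ := e.trans (Equiv.swap (e (ℓ u₀)) ⟨0, by omega⟩)
  have hσ₀ : σ (ℓ u₀) = ⟨0, by omega⟩ := by simp [σ]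
  have hcell₀ : ∀ v, (σ (ℓ v) : ℕ) = 0 ↔ v = u₀ := fun v => by
    rw [← Fin.val_mk (show 0 < Fintype.card κ by omega), ← hσ₀, Fin.val_inj, σ.injective.eq_iff]
    exact ⟨hℓ₀ v, by rintro rfl; rfl⟩
  have hσorbit : ∀ y z, σ (ℓ y) = σ (ℓ z) →
      ∃ φ : G ≃g G, φ y = z ∧ ∀ w, σ (ℓ (φ w)) = σ (ℓ w) := fun y z hyz => by
    simpa using horbit y z (σ.injective hyz)
  obtain ⟨C, hC⟩ : ∃ C, IsWitnessingPartition G C u₀ (σ ∘ ℓ) :=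
    ⟨_, isWitnessingPartition_of_invariant hcell₀ (σ.surjective.comp hsurj) hσorbit⟩
  refine ⟨_, C, hκ, hκV, fun u => ?_⟩
  obtain ⟨τ, rfl⟩ := htrans u
  exact ⟨_, hC.comp_iso τ⟩

end HighlyRegular

section Cycle

variable {n : ℕ}

def circNorm (d : Fin n) : ℕ := min d.val (-d).val

lemma circNorm_eq_min (d : Fin (n + 1)) : circNorm d = min d.val (n + 1 - d.val) := by
  simp only [circNorm, Fin.val_neg]
  split_ifs with h
  · simp [h]
  · rfl

lemma circNorm_neg (d : Fin n) : circNorm (-d) = circNorm d := by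
  simp [circNorm, min_comm]

lemma circNorm_eq_zero_iff {d : Fin (n + 1)} : circNorm d = 0 ↔ d = 0 := by
  rw [circNorm_eq_min, Fin.ext_iff, Fin.val_zero]
  omega

@[simp]
lemma circNorm_zero : circNorm (0 : Fin (n + 1)) = 0 := circNorm_eq_zero_iff.mpr rfl

lemma circNorm_le_half (d : Fin n) : circNorm d ≤ n / 2 := by
  rcases n with _ | n
  · exact d.elim0
  rw [circNorm_eq_min]
  omega

lemma circNorm_mk {k : ℕ} (hk : k ≤ n / 2) (hkn : k < n) : circNorm (⟨k, hkn⟩ : Fin n) = k := by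
  rcases n with _ | n
  · omega
  simp only [circNorm_eq_min]
  omega

lemma circNorm_add_one_le (d : Fin (n + 2)) : circNorm (d + 1) ≤ circNorm d + 1 := by
  simp only [circNorm_eq_min, Fin.val_add_one, Fin.ext_iff, Fin.val_last]
  split_ifs <;> omega

lemma circNorm_sub_one_le (d : Fin (n + 2)) : circNorm (d - 1) ≤ circNorm d + 1 := by
  rw [← circNorm_neg, ← circNorm_neg d, neg_sub, ← neg_add_eq_sub]
  exact circNorm_add_one_le (-d)

lemma eq_or_eq_neg_of_circNorm_eq {x y : Fin (n + 1)} (h : circNorm x = circNorm y) :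
    y = x ∨ y = -x := by
  rw [circNorm_eq_min, circNorm_eq_min] at h
  simp only [Fin.ext_iff, Fin.val_neg, Fin.val_zero]
  split_ifs <;> omega

def circNormFin (d : Fin n) : Fin (n / 2 + 1) := ⟨circNorm d, Nat.lt_succ_of_le (circNorm_le_half d)⟩

lemma cycleGraph_adj_iff {a b : Fin (n + 2)} :
    (cycleGraph (n + 2)).Adj a b ↔ b = a + 1 ∨ a = b + 1 := by
  rw [cycleGraph_adj, sub_eq_iff_eq_add, sub_eq_iff_eq_add, add_comm 1, add_comm 1, or_comm]

lemma dist_cycleGraph_le_val_sub (u v : Fin (n + 2)) :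
    (cycleGraph (n + 2)).dist u v ≤ (v - u).val := by
  induction hk : (v - u).val generalizing v with
  | zero => simp [sub_eq_zero.mp (Fin.ext hk : v - u = 0)]
  | succ k ih =>
    have hvu : v - u ≠ 0 := by simp [Fin.ext_iff, hk]
    have hprev : (v - 1 - u).val = k := by
      rw [sub_right_comm, Fin.coe_sub_one, if_neg hvu, hk, Nat.add_sub_cancel]
    have hadj : (cycleGraph (n + 2)).Adj (v - 1) v := cycleGraph_adj_iff.mpr (Or.inl (by simp))
    calc (cycleGraph (n + 2)).dist u v
        ≤ (cycleGraph (n + 2)).dist u (v - 1) + (cycleGraph (n + 2)).dist (v - 1) v :=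
          cycleGraph_connected.dist_triangle
      _ ≤ k + 1 := by rw [dist_eq_one_iff_adj.mpr hadj]; exact Nat.add_le_add_right (ih _ hprev) 1

lemma dist_cycleGraph (u v : Fin (n + 2)) : (cycleGraph (n + 2)).dist u v = circNorm (v - u) := by
  apply le_antisymm
  · refine le_min (dist_cycleGraph_le_val_sub u v) ?_
    rw [dist_comm, neg_sub]
    exact dist_cycleGraph_le_val_sub v u
  · have hstep : ∀ a b, (cycleGraph (n + 2)).Adj a b →
        circNorm (b - u) ≤ circNorm (a - u) + 1 := by
      intro a b hab
      rcases cycleGraph_adj_iff.mp hab with rfl | rfl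
      · rw [add_sub_right_comm]
        exact circNorm_add_one_le _
      · have := circNorm_sub_one_le (b - u + 1)
        rwa [add_sub_cancel_right, ← add_sub_right_comm] at this
    simpa using (cycleGraph_connected.preconnected u v).le_add_dist _ hstep

def SimpleGraph.cycleGraphAddRight (a : Fin (n + 2)) :
    cycleGraph (n + 2) ≃g cycleGraph (n + 2) where
  toEquiv := Equiv.addRight a
  map_rel_iff' := by simp [cycleGraph_adj]

def SimpleGraph.cycleGraphNeg : cycleGraph (n + 2) ≃g cycleGraph (n + 2) where
  toEquiv := Equiv.neg _
  map_rel_iff' := by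
    simp only [Equiv.neg_apply, cycleGraph_adj, neg_sub_neg, or_comm, implies_true]

lemma exists_cycleGraph_iso_of_circNorm_eq {x y : Fin (n + 2)} (h : circNorm x = circNorm y) :
    ∃ φ : cycleGraph (n + 2) ≃g cycleGraph (n + 2),
      φ x = y ∧ ∀ w, circNorm (φ w) = circNorm w := by
  rcases eq_or_eq_neg_of_circNorm_eq h with rfl | rfl
  · exact ⟨.refl, rfl, fun _ => rfl⟩
  · exact ⟨cycleGraphNeg, rfl, circNorm_neg⟩

end Cycle

section Torus

variable {n m : ℕ}

def torusDist (a b : Fin n × Fin m) : ℕ := circNorm (b.1 - a.1) + circNorm (b.2 - a.2)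

lemma torus_connected : (cycleGraph (n + 2) □ cycleGraph (m + 2)).Connected :=
  cycleGraph_connected.boxProd cycleGraph_connected

lemma dist_torus (a b : Fin (n + 2) × Fin (m + 2)) :
    (cycleGraph (n + 2) □ cycleGraph (m + 2)).dist a b = torusDist a b := by
  rw [dist_boxProd cycleGraph_connected cycleGraph_connected, dist_cycleGraph, dist_cycleGraph,
    torusDist]

lemma exists_torus_iso_apply_eq_zero (u : Fin (n + 2) × Fin (m + 2)) :
    ∃ τ : (cycleGraph (n + 2) □ cycleGraph (m + 2)) ≃g (cycleGraph (n + 2) □ cycleGraph (m + 2)),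
      τ u = 0 :=
  ⟨.boxProdCongr (cycleGraphAddRight (-u.1)) (cycleGraphAddRight (-u.2)),
    Prod.ext (add_neg_cancel u.1) (add_neg_cancel u.2)⟩

lemma isHighlyRegular_torus_of_ne (h : n ≠ 0 ∨ m ≠ 0) :
    IsHighlyRegular (cycleGraph (n + 2) □ cycleGraph (m + 2)) := by
  let ℓ : Fin (n + 2) × Fin (m + 2) → Fin ((n + 2) / 2 + 1) × Fin ((m + 2) / 2 + 1) :=
    fun v => (circNormFin v.1, circNormFin v.2)
  refine isHighlyRegular_of_invariant_labelling 0 ℓ ?_ ?_ ?_ exists_torus_iso_apply_eq_zero ?_ ?_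
  · rintro ⟨a, b⟩
    refine ⟨(⟨a, by omega⟩, ⟨b, by omega⟩), Prod.ext (Fin.ext ?_) (Fin.ext ?_)⟩
    · exact circNorm_mk (by omega) _
    · exact circNorm_mk (by omega) _
  · rintro ⟨a, b⟩ hab
    simp only [ℓ, circNormFin, Prod.mk.injEq, Fin.mk.injEq, Prod.fst_zero, Prod.snd_zero,
      circNorm_zero, circNorm_eq_zero_iff] at hab
    exact Prod.ext hab.1 hab.2
  · rintro ⟨y₁, y₂⟩ ⟨z₁, z₂⟩ hyz
    simp only [ℓ, circNormFin, Prod.mk.injEq, Fin.mk.injEq] at hyz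
    obtain ⟨φ₁, hφ₁, hφ₁n⟩ := exists_cycleGraph_iso_of_circNorm_eq hyz.1
    obtain ⟨φ₂, hφ₂, hφ₂n⟩ := exists_cycleGraph_iso_of_circNorm_eq hyz.2
    exact ⟨.boxProdCongr φ₁ φ₂, Prod.ext hφ₁ hφ₂,
      fun w => Prod.ext (Fin.ext (hφ₁n w.1)) (Fin.ext (hφ₂n w.2))⟩
  · simp only [Fintype.card_prod, Fintype.card_fin]
    exact le_trans (by norm_num) (Nat.mul_le_mul (show 2 ≤ (n + 2) / 2 + 1 by omega)
      (show 2 ≤ (m + 2) / 2 + 1 by omega))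
  · left
    simp only [Fintype.card_prod, Fintype.card_fin]
    rcases h with h | h
    · exact Nat.mul_lt_mul_of_lt_of_le (by omega) (by omega) (by omega)
    · exact Nat.mul_lt_mul_of_le_of_lt (by omega) (by omega) (by omega)

lemma isHighlyRegular_torus_two_two : IsHighlyRegular (cycleGraph 2 □ cycleGraph 2) := by
  let ℓ : Fin 2 × Fin 2 → Fin 3 := fun v => ⟨v.1.val + v.2.val, by omega⟩
  have hswap : ∀ y z, ℓ y = ℓ z → z = y ∨ z = y.swap := by decide
  refine isHighlyRegular_of_invariant_labelling 0 ℓ (by decide) (by decide) (fun y z hyz => ?_)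
    exists_torus_iso_apply_eq_zero (by simp) (by simp)
  rcases hswap y z hyz with rfl | rfl
  · exact ⟨.refl, rfl, fun _ => rfl⟩
  · exact ⟨boxProdComm _ _, rfl, by decide⟩

lemma isHighlyRegular_torus : IsHighlyRegular (cycleGraph (n + 2) □ cycleGraph (m + 2)) := by
  by_cases h : n = 0 ∧ m = 0
  · obtain ⟨rfl, rfl⟩ := h
    exact isHighlyRegular_torus_two_two
  · exact isHighlyRegular_torus_of_ne (by omega)

def torusNeighborCount (u v : Fin n × Fin m) (j : ℕ) : ℕ :=
  (Finset.univ.filter fun w => torusDist v w = 1 ∧ torusDist u w = j).card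

lemma ncard_adj_dist_torus (u v : Fin (n + 2) × Fin (m + 2)) (j : ℕ) :
    {w | (cycleGraph (n + 2) □ cycleGraph (m + 2)).Adj v w ∧
      (cycleGraph (n + 2) □ cycleGraph (m + 2)).dist u w = j}.ncard = torusNeighborCount u v j := by
  rw [torusNeighborCount, ← Set.ncard_coe_finset]
  congr 1
  ext w
  simp [← dist_eq_one_iff_adj, dist_torus]

lemma isDistanceRegular_torus_of_counts (D : ℕ) (F : ℕ → ℕ → ℕ)
    (hD : ∀ u v : Fin (n + 2) × Fin (m + 2), torusDist u v ≤ D)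
    (hF : ∀ u v : Fin (n + 2) × Fin (m + 2), ∀ j ≤ D + 1,
      torusNeighborCount u v j = F (torusDist u v) j) :
    IsDistanceRegular (cycleGraph (n + 2) □ cycleGraph (m + 2)) := by
  refine ⟨torus_connected, fun i _ _ j hj u v x y huv hxy => ?_⟩
  rw [dist_torus] at huv hxy
  have hjD : j ≤ D + 1 := by have := hD u v; omega
  rw [ncard_adj_dist_torus, ncard_adj_dist_torus, hF u v j hjD, hF x y j hjD, huv, hxy]

lemma not_isDistanceRegular_torus_of_counts {u v x y : Fin (n + 2) × Fin (m + 2)} {i j : ℕ}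
    (hi : 1 ≤ i) (hj : j = i - 1 ∨ j = i ∨ j = i + 1)
    (huv : torusDist u v = i) (hxy : torusDist x y = i)
    (hne : torusNeighborCount u v j ≠ torusNeighborCount x y j) :
    ¬ IsDistanceRegular (cycleGraph (n + 2) □ cycleGraph (m + 2)) := by
  rintro ⟨hconn, hreg⟩
  rw [← dist_torus] at huv hxy
  have hdiam := huv ▸ dist_le_diam (connected_iff_ediam_ne_top.mp hconn) (u := u) (v := v)
  apply hne
  rw [← ncard_adj_dist_torus, ← ncard_adj_dist_torus]
  exact hreg i hi hdiam j hj u v x y huv hxy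

/-- The intersection array `{b₀, …, b_{d-1}; c₁, …, c_d}` is passed as `b = [b₀, …, b_{d-1}]`,
`c = [c₁, …, c_d]`; the value is the number of neighbours at distance `j` from `u` of a vertex
at distance `i` from `u`. -/
def intersectionArrayCount (b c : List ℕ) (i j : ℕ) : ℕ :=
  let bᵢ := b.getD i 0
  let cᵢ := if i = 0 then 0 else c.getD (i - 1) 0
  if j = i + 1 then bᵢ else if j + 1 = i then cᵢ else if j = i then b.getD 0 0 - bᵢ - cᵢ else 0

lemma isDistanceRegular_torus_two_two : IsDistanceRegular (cycleGraph 2 □ cycleGraph 2) :=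
  isDistanceRegular_torus_of_counts 2 (intersectionArrayCount [2, 1] [1, 2]) (by decide) (by decide)

lemma isDistanceRegular_torus_two_four : IsDistanceRegular (cycleGraph 2 □ cycleGraph 4) :=
  isDistanceRegular_torus_of_counts 3 (intersectionArrayCount [3, 2, 1] [1, 2, 3]) (by decide)
    (by decide)

lemma isDistanceRegular_torus_three_three : IsDistanceRegular (cycleGraph 3 □ cycleGraph 3) :=
  isDistanceRegular_torus_of_counts 2 (intersectionArrayCount [4, 2] [1, 2]) (by decide) (by decide)

lemma isDistanceRegular_torus_four_four : IsDistanceRegular (cycleGraph 4 □ cycleGraph 4) :=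
  isDistanceRegular_torus_of_counts 4 (intersectionArrayCount [4, 3, 2, 1] [1, 2, 3, 4])
    (by decide) (by decide)

lemma not_isDistanceRegular_torus_two_three : ¬ IsDistanceRegular (cycleGraph 2 □ cycleGraph 3) :=
  not_isDistanceRegular_torus_of_counts (u := 0) (v := (1, 0)) (x := 0) (y := (0, 1)) (i := 1)
    le_rfl (Or.inr (Or.inl rfl)) (by decide) (by decide) (by decide)

lemma not_isDistanceRegular_torus_three_four : ¬ IsDistanceRegular (cycleGraph 3 □ cycleGraph 4) :=
  not_isDistanceRegular_torus_of_counts (u := 0) (v := (1, 1)) (x := 0) (y := (0, 2)) (i := 2)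
    (by norm_num) (Or.inr (Or.inl rfl)) (by decide) (by decide) (by decide)

lemma not_isDistanceRegular_torus_of_five_le :
    ¬ IsDistanceRegular (cycleGraph (n + 2) □ cycleGraph (m + 5)) := by
  have hcount₁ : torusNeighborCount (0 : Fin (n + 2) × Fin (m + 5)) (1, 1) 1 = 2 := by
    rw [torusNeighborCount, Finset.card_eq_two]
    refine ⟨(0, 1), (1, 0), by simp [Prod.ext_iff], ?_⟩
    ext ⟨a, b⟩
    simp only [Finset.mem_filter, Finset.mem_univ, true_and, Finset.mem_insert,
      Finset.mem_singleton, Prod.mk.injEq, torusDist, Prod.fst_zero, Prod.snd_zero, sub_zero,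
      circNorm_eq_min, Fin.coe_sub_one, Fin.ext_iff, Fin.val_zero, Fin.val_one]
    split_ifs <;> omega
  have hcount₂ : torusNeighborCount ((0, -1) : Fin (n + 2) × Fin (m + 5)) (0, 1) 1 = 1 := by
    rw [torusNeighborCount, Finset.card_eq_one]
    refine ⟨(0, 0), ?_⟩
    ext ⟨a, b⟩
    simp only [Finset.mem_filter, Finset.mem_univ, true_and, Finset.mem_singleton,
      Prod.mk.injEq, torusDist, sub_zero, sub_neg_eq_add, circNorm_eq_min, Fin.coe_sub_one,
      Fin.val_add_one, Fin.ext_iff, Fin.val_zero, Fin.val_last]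
    split_ifs <;> omega
  refine not_isDistanceRegular_torus_of_counts (u := 0) (v := (1, 1)) (x := (0, -1)) (y := (0, 1))
    (i := 2) (by norm_num) (Or.inl rfl) ?_ ?_ (by rw [hcount₁, hcount₂]; decide)
  · simp [torusDist, circNorm_eq_min]
  · have htwo : ((1 : Fin (m + 5)) + 1).val = 2 := by simp [Fin.val_add]
    simp [torusDist, circNorm_eq_min, htwo]

end Torus

/-- For `2 ≤ n ≤ m`, the torus graph `T_{n,m} = C_n □ C_m` is a connected
highly-regular graph, and it is distance-regular iff
`(n,m) ∈ {(2,2), (2,4), (3,3), (4,4)}`. -/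
theorem stmt15 (n m : ℕ) (hn : 2 ≤ n) (hnm : n ≤ m) :
    ((SimpleGraph.cycleGraph n).boxProd (SimpleGraph.cycleGraph m)).Connected ∧
    IsHighlyRegular ((SimpleGraph.cycleGraph n).boxProd (SimpleGraph.cycleGraph m)) ∧
    (IsDistanceRegular ((SimpleGraph.cycleGraph n).boxProd (SimpleGraph.cycleGraph m)) ↔
      ((n = 2 ∧ m = 2) ∨ (n = 2 ∧ m = 4) ∨ (n = 3 ∧ m = 3) ∨ (n = 4 ∧ m = 4))) := by
  obtain ⟨n, rfl⟩ := Nat.exists_eq_add_of_le' hn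
  obtain ⟨m, rfl⟩ := Nat.exists_eq_add_of_le' (hn.trans hnm)
  refine ⟨torus_connected, isHighlyRegular_torus, fun hdr => ?_, ?_⟩
  · rcases Nat.lt_or_ge m 3 with hm | hm
    · have : n ≤ m := by omega
      interval_cases m <;> interval_cases n
      all_goals first
        | decide
        | exact absurd hdr not_isDistanceRegular_torus_two_three
        | exact absurd hdr not_isDistanceRegular_torus_three_four
    · obtain ⟨m, rfl⟩ := Nat.exists_eq_add_of_le' hm
      exact absurd hdr not_isDistanceRegular_torus_of_five_le
  · rintro (⟨h₁, h₂⟩ | ⟨h₁, h₂⟩ | ⟨h₁, h₂⟩ | ⟨h₁, h₂⟩) <;> cases h₁ <;> cases h₂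
    exacts [isDistanceRegular_torus_two_two, isDistanceRegular_torus_two_four,
      isDistanceRegular_torus_three_three, isDistanceRegular_torus_four_four]
end

section
/- Let Γ₁ be a connected highly-regular graph which is not a distance-regular graph, and let Γ₂ be a connected highly-regular graph. Then the Cartesian product Γ₁ □ Γ₂ is a connected highly-regular graph which is not a distance-regular graph. -/
/-!
Distances in `G □ H` add coordinatewise. Hence, for `u v : V` and a fixed `w : W`, the neighbours
of `(v, w)` at distance `j` from `(u, w)` are the neighbours of `v` at distance `j` from `u`,
together with a set of vertices `(v, c)` whose size only depends on `d(u, v)`, `w` and `j`;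
so distance-regularity of the product descends to `G`. Conversely, products of witnessing
partitions of `G` and `H` witness a product CAM of size `m * k`, which is smaller than
`|V| * |W|` because `m < |V|`: a CAM of size `|V| = 2` would make `G = K₂`, which is
distance-regular.
-/

namespace SimpleGraph

variable {V W : Type*} {G : SimpleGraph V} {H : SimpleGraph W}

lemma dist_boxProd_s16 {x y : V × W} (hG : G.Reachable x.1 y.1) (hH : H.Reachable x.2 y.2) :
    (G.boxProd H).dist x y = G.dist x.1 y.1 + H.dist x.2 y.2 := by
  rw [dist, edist_boxProd, ENat.toNat_add (edist_ne_top_iff_reachable.mpr hG)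
    (edist_ne_top_iff_reachable.mpr hH)]
  rfl

lemma ncard_setOf_boxProd_adj_and [Finite V] [Finite W] (y : V × W) (S : V × W → Prop) :
    {z | (G.boxProd H).Adj y z ∧ S z}.ncard =
      {a | G.Adj y.1 a ∧ S (a, y.2)}.ncard + {b | H.Adj y.2 b ∧ S (y.1, b)}.ncard := by
  have hsplit : {z | (G.boxProd H).Adj y z ∧ S z} =
      (·, y.2) '' {a | G.Adj y.1 a ∧ S (a, y.2)} ∪ (y.1, ·) '' {b | H.Adj y.2 b ∧ S (y.1, b)} := by
    ext ⟨a, b⟩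
    simp only [Set.mem_ofPred_eq, boxProd_adj, Set.mem_union, Set.mem_image, Prod.mk.injEq]
    constructor
    · rintro ⟨⟨hadj, rfl⟩ | ⟨hadj, rfl⟩, hS⟩
      exacts [Or.inl ⟨a, ⟨hadj, hS⟩, rfl, rfl⟩, Or.inr ⟨b, ⟨hadj, hS⟩, rfl, rfl⟩]
    · rintro (⟨a, ⟨hadj, hS⟩, rfl, rfl⟩ | ⟨b, ⟨hadj, hS⟩, rfl, rfl⟩)
      exacts [⟨Or.inl ⟨hadj, rfl⟩, hS⟩, ⟨Or.inr ⟨hadj, rfl⟩, hS⟩]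
  rw [hsplit, Set.ncard_union_eq, Set.ncard_image_of_injective _ (Prod.mk_left_injective _),
    Set.ncard_image_of_injective _ (Prod.mk_right_injective _)]
  refine Set.disjoint_left.mpr ?_
  rintro _ ⟨a, ha, rfl⟩ ⟨b, -, hab⟩
  obtain rfl : y.1 = a := (Prod.ext_iff.mp hab).1
  exact G.irrefl ha.1

lemma adj_iff_eq_of_card_eq_two [Fintype V] (h2 : Fintype.card V = 2) (hc : G.Connected)
    {u v : V} (huv : u ≠ v) (w : V) : G.Adj v w ↔ w = u := by
  have huniq : ∃! y, y ≠ v := (Nat.card_eq_two_iff' v).mp (by rw [Nat.card_eq_fintype_card, h2])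
  refine ⟨fun h => huniq.unique h.ne' huv, ?_⟩
  rintro rfl
  have : Nontrivial V := ⟨⟨w, v, huv⟩⟩
  obtain ⟨c, hvc⟩ := hc.preconnected.exists_adj_of_nontrivial v
  rwa [huniq.unique huv hvc.ne']

end SimpleGraph

section BoxProd

open SimpleGraph

variable {V W : Type*} [Fintype V] [Fintype W] {G : SimpleGraph V} {H : SimpleGraph W}

lemma isDistanceRegular_of_card_eq_two (h2 : Fintype.card V = 2) (hc : G.Connected) :
    IsDistanceRegular G := by
  have hcount : ∀ {a b : V} (j : ℕ), a ≠ b →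
      {w | G.Adj b w ∧ G.dist a w = j}.ncard = if j = 0 then 1 else 0 := by
    intro a b j hab
    have hset : {w | G.Adj b w ∧ G.dist a w = j} = {w | w = a ∧ j = 0} := by
      ext w
      rw [Set.mem_ofPred_eq, Set.mem_ofPred_eq, adj_iff_eq_of_card_eq_two h2 hc hab]
      constructor
      · rintro ⟨rfl, h⟩
        exact ⟨rfl, by rw [← h, SimpleGraph.dist_self]⟩
      · rintro ⟨rfl, rfl⟩
        exact ⟨rfl, SimpleGraph.dist_self⟩
    rw [hset]
    split_ifs with hj <;> simp [hj]
  refine ⟨hc, fun i hi _ j _ u v x y huv hxy => ?_⟩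
  have hne : ∀ {a b : V}, G.dist a b = i → a ≠ b := by
    rintro a _ h rfl
    rw [SimpleGraph.dist_self] at h
    omega
  rw [hcount j (hne huv), hcount j (hne hxy)]

lemma IsDistanceRegular.of_boxProd (h : IsDistanceRegular (G.boxProd H)) :
    IsDistanceRegular G := by
  obtain ⟨hconn, hreg⟩ := h
  have hG := hconn.ofBoxProdLeft
  have hH := hconn.ofBoxProdRight
  obtain ⟨w⟩ := hH.nonempty
  have hdist (a b : V) (c : W) :
      (G.boxProd H).dist (a, w) (b, c) = G.dist a b + H.dist w c :=
    dist_boxProd_s16 (hG.preconnected a b) (hH.preconnected w c)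
  refine ⟨hG, fun i hi _ j hj u v x y huv hxy => ?_⟩
  have hdist_i {a b : V} (hab : G.dist a b = i) : (G.boxProd H).dist (a, w) (b, w) = i := by
    rw [hdist, dist_self, add_zero, hab]
  have hcount {a b : V} (hab : G.dist a b = i) :
      {p | (G.boxProd H).Adj (b, w) p ∧ (G.boxProd H).dist (a, w) p = j}.ncard =
        {z | G.Adj b z ∧ G.dist a z = j}.ncard + {c | H.Adj w c ∧ i + H.dist w c = j}.ncard := by
    simp only [ncard_setOf_boxProd_adj_and, hdist, dist_self, add_zero, hab]
  have hi_le : i ≤ (G.boxProd H).diam := by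
    have := hconn.nonempty
    rw [← hdist_i huv]
    exact dist_le_diam (connected_iff_ediam_ne_top.mp hconn)
  have key := hreg i hi hi_le j hj _ _ _ _ (hdist_i huv) (hdist_i hxy)
  rwa [hcount huv, hcount hxy, Nat.add_right_cancel_iff] at key

/-- Cell `(i, i')` of the product partition is `V_i(u) × W_{i'}(w)`, numbered through
`finProdFinEquiv`; an edge of `G □ H` moves along `G` inside a fixed `W_{i'}`, or along `H`
inside a fixed `V_i`. -/
def boxProdCAM {m k : ℕ} (C : Fin m → Fin m → ℕ) (D : Fin k → Fin k → ℕ)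
    (s t : Fin (m * k)) : ℕ :=
  let s' := finProdFinEquiv.symm s
  let t' := finProdFinEquiv.symm t
  (if s'.2 = t'.2 then C s'.1 t'.1 else 0) + (if s'.1 = t'.1 then D s'.2 t'.2 else 0)

section CAM

variable {m k : ℕ} {C : Fin m → Fin m → ℕ} {D : Fin k → Fin k → ℕ}

lemma boxProdCAM_finProdFinEquiv (i j : Fin m) (i' j' : Fin k) :
    boxProdCAM C D (finProdFinEquiv (i, i')) (finProdFinEquiv (j, j')) =
      (if i' = j' then C i j else 0) + (if i = j then D i' j' else 0) := by
  simp [boxProdCAM]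

lemma IsWitnessingPartition.boxProd {u : V} {w : W} {P : V → Fin m} {Q : W → Fin k}
    (hP : IsWitnessingPartition G C u P) (hQ : IsWitnessingPartition H D w Q) :
    IsWitnessingPartition (G.boxProd H) (boxProdCAM C D) (u, w)
      (fun z => finProdFinEquiv (P z.1, Q z.2)) := by
  obtain ⟨hP0, hPsurj, hPcount⟩ := hP
  obtain ⟨hQ0, hQsurj, hQcount⟩ := hQ
  refine ⟨fun ⟨a, b⟩ => ?_, fun t => ?_, fun s t y hy => ?_⟩
  · simp only [finProdFinEquiv_apply_val, Nat.add_eq_zero_iff, mul_eq_zero, (Q b).pos.ne',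
      false_or, hP0, hQ0, Prod.mk.injEq]
    exact and_comm
  · obtain ⟨⟨i, i'⟩, rfl⟩ := finProdFinEquiv.surjective t
    obtain ⟨a, rfl⟩ := hPsurj i
    obtain ⟨b, rfl⟩ := hQsurj i'
    exact ⟨(a, b), rfl⟩
  · obtain ⟨⟨i, i'⟩, rfl⟩ := finProdFinEquiv.surjective s
    obtain ⟨⟨j, j'⟩, rfl⟩ := finProdFinEquiv.surjective t
    obtain ⟨hj, hj'⟩ : P y.1 = j ∧ Q y.2 = j' := by simpa using hy
    simp_rw [and_comm (b := (G.boxProd H).Adj y _)]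
    rw [ncard_setOf_boxProd_adj_and, boxProdCAM_finProdFinEquiv]
    simp only [EmbeddingLike.apply_eq_iff_eq, Prod.mk.injEq, hj, hj']
    congr 1
    · split_ifs with h
      · simp [h, ← hPcount i j y.1 hj, and_comm]
      · simp [Ne.symm h]
    · split_ifs with h
      · simp [h, ← hQcount i' j' y.2 hj', and_comm]
      · simp [Ne.symm h]

lemma IsCAM.boxProd (hC : IsCAM G C) (hm : m < Fintype.card V) (hD : IsCAM H D) :
    IsCAM (G.boxProd H) (boxProdCAM C D) := by
  obtain ⟨hm2, -, hP⟩ := hC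
  obtain ⟨hk2, hk, hQ⟩ := hD
  have hkW : k ≤ Fintype.card W := by omega
  refine ⟨?_, Or.inl ?_, fun ⟨u, w⟩ => ?_⟩
  · nlinarith
  · rw [Fintype.card_prod]
    exact Nat.mul_lt_mul_of_lt_of_le hm hkW (by omega)
  · obtain ⟨P, hPu⟩ := hP u
    obtain ⟨Q, hQw⟩ := hQ w
    exact ⟨_, hPu.boxProd hQw⟩

lemma IsCAM.lt_card (hC : IsCAM G C) (hc : G.Connected) (hG : ¬ IsDistanceRegular G) :
    m < Fintype.card V :=
  hC.2.1.resolve_right fun ⟨_, h2⟩ => hG (isDistanceRegular_of_card_eq_two h2 hc)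

end CAM

lemma IsHighlyRegular.boxProd (hG : IsHighlyRegular G) (hc : G.Connected)
    (hGnd : ¬ IsDistanceRegular G) (hH : IsHighlyRegular H) : IsHighlyRegular (G.boxProd H) := by
  obtain ⟨m, C, hC⟩ := hG
  obtain ⟨k, D, hD⟩ := hH
  exact ⟨_, _, hC.boxProd (hC.lt_card hc hGnd) hD⟩

end BoxProd

/-- The Cartesian product of a connected highly-regular graph which is
not distance-regular with any connected highly-regular graph is a connected
highly-regular graph which is not distance-regular. -/
theorem stmt16 {V W : Type*} [Fintype V] [Fintype W]
    (G : SimpleGraph V) (H : SimpleGraph W)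
    (hGconn : G.Connected) (hGhr : IsHighlyRegular G) (hGnd : ¬ IsDistanceRegular G)
    (hHconn : H.Connected) (hHhr : IsHighlyRegular H) :
    (G.boxProd H).Connected ∧ IsHighlyRegular (G.boxProd H) ∧
      ¬ IsDistanceRegular (G.boxProd H) :=
  ⟨hGconn.boxProd hHconn, hGhr.boxProd hGconn hGnd hHhr, fun h => hGnd h.of_boxProd⟩
end
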